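/- arXiv:1909.03927 — 6 statements merged into one kernel-verified Lean document; each statement's English description precedes it below -/
import Mathlib

section
/- Let n ≥ 7 be odd, and in the alternating group A_n on {1,…,n} let x₁ = (1,2,4) and y₁ = (1,2,3,4,…,n). Then x₁ and y₁ generate A_n, and their product x₁y₁ = (1,3,4,2,5,6,…,n) is an n-cycle. -/
/-!
Write `x = (0,1,3)`, `c = (0,1,…,n-1)` and `τ = (0,1)` (points are zero-based). As `n` is
odd, `c` is even, so `G = ⟨x, c⟩ ≤ Aₙ`. The transposition `τ` normalizes `G`: `τxτ = x⁻¹`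
and `τcτ = (0,1,2)c`, where `(0,1,2)` is the conjugate of `x` by `(2,3,5)⁻¹` and
`(2,3,5) = c²xc⁻²`. Since `c` and `τ` generate `Sₙ`, `G` is a nontrivial normal subgroup of
`Sₙ`, hence contains `Aₙ`. Finally `cx = πcπ⁻¹` for `π = (1,2,3)`, so `cx` is the `n`-cycle
of the list `π(0,1,…,n-1)`.
-/
open Equiv Equiv.Perm List Subgroup

theorem Subgroup.mem_normalizer_closure_of_forall_conj_mem {G : Type*} [Group G] [Finite G]
    {s : Set G} {g : G} (h : ∀ a ∈ s, g * a * g⁻¹ ∈ closure s) :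
    g ∈ normalizer (closure s : Set G) := by
  refine mem_normalizer_fintype fun a ha => ?_
  induction ha using closure_induction with
  | mem a ha => exact h a ha
  | one => simp
  | mul a b _ _ ha hb => simpa [mul_assoc] using mul_mem ha hb
  | inv a _ ha => simpa [mul_assoc] using inv_mem ha

namespace Equiv.Perm

variable {α : Type*} [DecidableEq α]

theorem mul_formPerm_mul_inv (σ : Perm α) (l : List α) :
    σ * formPerm l * σ⁻¹ = formPerm (l.map σ) := by
  induction l with
  | nil => simp
  | cons a l ih =>
    cases l with
    | nil => simp
    | cons b l =>
      rw [formPerm_cons_cons, map_cons, map_cons, formPerm_cons_cons, ← map_cons, ← ih,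
        swap_apply_apply]
      group

theorem formPerm_map_mem {H : Subgroup (Perm α)} {σ : Perm α} (hσ : σ ∈ H) {l : List α}
    (hl : formPerm l ∈ H) : formPerm (l.map σ) ∈ H := by
  rw [← mul_formPerm_mul_inv]
  exact H.mul_mem (H.mul_mem hσ hl) (H.inv_mem hσ)

theorem swap_mul_mul_swap_eq_formPerm_mul (c : Perm α) (a : α) :
    swap a (c a) * c * swap a (c a) = formPerm [a, c a, c (c a)] * c := by
  rw [formPerm_cons_cons, formPerm_pair, mul_assoc (swap a (c a)), swap_apply_apply]
  group

theorem swap_mul_formPerm_mul_swap_eq_inv {a b d : α} (h : [a, b, d].Nodup) :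
    swap a b * formPerm [a, b, d] * swap a b = (formPerm [a, b, d])⁻¹ := by
  simp only [nodup_cons, mem_cons, mem_nil_iff, or_false, not_or] at h
  obtain ⟨⟨hab, had⟩, hbd, -⟩ := h
  have hnodup : [d, b, a].Nodup := by simp [Ne.symm hab, Ne.symm had, Ne.symm hbd]
  have hconj := mul_formPerm_mul_inv (swap a b) [a, b, d]
  rw [swap_inv] at hconj
  have hmap : [a, b, d].map (swap a b) = [d, b, a].rotate 1 := by
    simp [swap_apply_of_ne_of_ne (Ne.symm had) (Ne.symm hbd)]
  rw [hconj, hmap, formPerm_rotate_one _ hnodup]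
  exact formPerm_reverse [a, b, d]

theorem formPerm_mul_formPerm_eq_of_nodup {a b d e : α} (h : [a, b, d, e].Nodup) :
    formPerm [a, b, d] * formPerm [b, e, d] = formPerm [a, b, e] := by
  simp only [nodup_cons, mem_cons, mem_nil_iff, or_false, not_or] at h
  obtain ⟨⟨hab, had, hae⟩, ⟨hbd, hbe⟩, hde, -⟩ := h
  simp only [formPerm_cons_cons, formPerm_singleton, mul_one, mul_assoc]
  congr 1
  ext z
  simp only [mul_apply, swap_apply_def]
  split_ifs <;> simp_all

theorem formPerm_triple_mem_alternatingGroup [Fintype α] {a b d : α}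
    (hab : a ≠ b) (hbd : b ≠ d) : formPerm [a, b, d] ∈ alternatingGroup α := by
  simp [mem_alternatingGroup, formPerm_cons_cons, sign_swap hab, sign_swap hbd]

end Equiv.Perm

theorem List.formPerm_finRange (n : ℕ) : formPerm (finRange n) = finRotate n := by
  ext i
  rcases n with _ | m
  · exact i.elim0
  · have hi : i.val < (finRange (m + 1)).length := by rw [length_finRange]; exact i.isLt
    conv_lhs => rw [show i = (finRange (m + 1))[i.val] by simp]
    rw [formPerm_apply_getElem _ (nodup_finRange _) _ hi]
    simp [finRotate_apply, Fin.add_def]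

section Fin

variable {n : ℕ} [NeZero n]

theorem map_formPerm_one_two_three_finRange (hn : 4 ≤ n) :
    (finRange n).map (formPerm [(1 : Fin n), 2, 3]) = [0, 2, 3, 1] ++ (finRange n).drop 4 := by
  have htake : (finRange n).take 4 = [0, 1, 2, 3] := by
    apply ext_getElem (by simp [hn])
    intro i h1 h2
    simp only [length_cons, length_nil] at h2
    interval_cases i <;> simp (disch := omega) [Fin.ext_iff, Nat.mod_eq_of_lt]
  have hdrop : ∀ i ∈ (finRange n).drop 4, formPerm [(1 : Fin n), 2, 3] i = i := by
    intro i hi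
    apply formPerm_apply_of_notMem
    obtain ⟨j, hj, rfl⟩ := mem_drop_iff_getElem.mp hi
    simp (disch := omega) only [getElem_finRange, Fin.cast_mk, mem_cons, Fin.ext_iff,
      Fin.coe_ofNat_eq_mod, Nat.mod_eq_of_lt, not_mem_nil, or_false, not_or]
    omega
  conv_lhs =>
    rw [← take_append_drop 4 (finRange n), map_append, htake, map_congr_left hdrop, List.map_id']
  simp (disch := omega) [formPerm_cons_cons, swap_apply_def, Fin.ext_iff, Nat.mod_eq_of_lt]

theorem finRotate_mul_formPerm_eq_conj (hn : 4 ≤ n) :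
    finRotate n * formPerm [0, 1, 3] =
      formPerm [(1 : Fin n), 2, 3] * finRotate n * (formPerm [(1 : Fin n), 2, 3])⁻¹ := by
  have hconj :
      finRotate n * formPerm [0, 1, 2] * (finRotate n)⁻¹ = formPerm [(1 : Fin n), 2, 3] := by
    have : [(0 : Fin n), 1, 2].map (finRotate n) = [1, 2, 3] := by
      simp [finRotate_apply, Fin.ext_iff, Fin.val_add]
    rw [mul_formPerm_mul_inv, this]
  have hP : formPerm [(0 : Fin n), 1, 3] * formPerm [1, 2, 3] = formPerm [0, 1, 2] :=
    formPerm_mul_formPerm_eq_of_nodup (by simp (disch := omega) [Fin.ext_iff, Nat.mod_eq_of_lt])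
  calc finRotate n * formPerm [0, 1, 3]
      = finRotate n * formPerm [0, 1, 2] * (formPerm [(1 : Fin n), 2, 3])⁻¹ := by
        rw [← hP]; group
    _ = _ := by rw [← hconj]; group

theorem formPerm_zero_one_two_mem_closure (hn : 6 ≤ n) :
    formPerm [(0 : Fin n), 1, 2] ∈ closure {formPerm [(0 : Fin n), 1, 3], finRotate n} := by
  set G := closure {formPerm [(0 : Fin n), 1, 3], finRotate n}
  have hx : formPerm [(0 : Fin n), 1, 3] ∈ G := subset_closure (by simp)
  have hc : finRotate n ∈ G := subset_closure (by simp)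
  have h124 : formPerm [(1 : Fin n), 2, 4] ∈ G := by
    have : [(0 : Fin n), 1, 3].map (finRotate n) = [1, 2, 4] := by
      simp [finRotate_apply, Fin.ext_iff, Fin.val_add]
    exact this ▸ formPerm_map_mem hc hx
  have h235 : formPerm [(2 : Fin n), 3, 5] ∈ G := by
    have : [(1 : Fin n), 2, 4].map (finRotate n) = [2, 3, 5] := by
      simp [finRotate_apply, Fin.ext_iff, Fin.val_add]
    exact this ▸ formPerm_map_mem hc h124
  have h532 : formPerm [(5 : Fin n), 3, 2] ∈ G := by
    have := inv_mem h235
    rwa [← formPerm_reverse] at this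
  have : [(0 : Fin n), 1, 3].map (formPerm [5, 3, 2]) = [0, 1, 2] := by
    simp (disch := omega) [formPerm_cons_cons, swap_apply_def, Fin.ext_iff, Nat.mod_eq_of_lt]
  exact this ▸ formPerm_map_mem h532 hx

theorem closure_formPerm_finRotate_eq_alternatingGroup (hn : 7 ≤ n) (hodd : Odd n) :
    closure {formPerm [(0 : Fin n), 1, 3], finRotate n} = alternatingGroup (Fin n) := by
  set G := closure {formPerm [(0 : Fin n), 1, 3], finRotate n}
  have hx : formPerm [(0 : Fin n), 1, 3] ∈ G := subset_closure (by simp)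
  have hc : finRotate n ∈ G := subset_closure (by simp)
  have hc0 : finRotate n 0 = 1 := by simp [finRotate_apply]
  have hc1 : finRotate n 1 = 2 := by simp [finRotate_apply, Fin.ext_iff, Fin.val_add]
  have hdistinct : [(0 : Fin n), 1, 3].Nodup := by
    simp (disch := omega) [Fin.ext_iff, Nat.mod_eq_of_lt]
  have hGA : G ≤ alternatingGroup (Fin n) := by
    rw [closure_le]
    rintro g (rfl | rfl)
    · exact formPerm_triple_mem_alternatingGroup
        (by simp (disch := omega) [Fin.ext_iff, Nat.mod_eq_of_lt])
        (by simp (disch := omega) [Fin.ext_iff, Nat.mod_eq_of_lt])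
    · obtain ⟨k, rfl⟩ := hodd
      exact finRotate_bit1_mem_alternatingGroup
  have hτ : swap 0 (finRotate n 0) ∈ normalizer (G : Set (Perm (Fin n))) := by
    refine mem_normalizer_closure_of_forall_conj_mem ?_
    rintro g (rfl | rfl) <;> rw [swap_inv]
    · rw [hc0, swap_mul_formPerm_mul_swap_eq_inv hdistinct]
      exact inv_mem hx
    · rw [swap_mul_mul_swap_eq_formPerm_mul, hc0, hc1]
      exact mul_mem (formPerm_zero_one_two_mem_closure (by omega)) hc
  have hnormal : G.Normal := by
    rw [← normalizer_eq_top_iff, eq_top_iff, ← closure_cycle_adjacent_swap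
      (isCycle_finRotate_of_le (by omega)) (support_finRotate_of_le (by omega)) 0, closure_le]
    rintro g (rfl | rfl)
    · exact le_normalizer hc
    · exact hτ
  have hnontrivial : Nontrivial G := by
    refine (nontrivial_iff_ne_bot G).mpr fun hbot => ?_
    rw [hbot, mem_bot, List.formPerm_eq_one_iff _ hdistinct] at hx
    simp at hx
  exact le_antisymm hGA (alternatingGroup_le_of_normal (by simp; omega) hnontrivial)

end Fin

/-- Mathlib's product applies the right-hand factor first, so the paper's `x₁y₁` is `y₁ * x₁`. -/
theorem alternatingGroup_odd_first_pair
    (n : ℕ) [NeZero n] (hn : 7 ≤ n) (hodd : Odd n)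
    (x₁ y₁ : Equiv.Perm (Fin n))
    (hx₁ : x₁ = List.formPerm [(0 : Fin n), 1, 3])
    (hy₁ : y₁ = List.formPerm (List.finRange n)) :
    Subgroup.closure {x₁, y₁} = alternatingGroup (Fin n) ∧
    y₁ * x₁ = List.formPerm ([(0 : Fin n), 2, 3, 1] ++ (List.finRange n).drop 4) ∧
    (y₁ * x₁).IsCycle ∧ (y₁ * x₁).support.card = n := by
  subst hx₁ hy₁
  rw [formPerm_finRange, finRotate_mul_formPerm_eq_conj (by omega)]
  refine ⟨closure_formPerm_finRotate_eq_alternatingGroup hn hodd, ?_,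
    (isCycle_finRotate_of_le (by omega)).conj, ?_⟩
  · rw [← map_formPerm_one_two_three_finRange (by omega), ← mul_formPerm_mul_inv,
      formPerm_finRange]
  · rw [card_support_conj, support_finRotate_of_le (by omega), Finset.card_univ,
      Fintype.card_fin]
end

section
/- Let p ≥ 5 be a prime and let n ≥ r ≥ 1 be integers. Then the group G = ⟨x, y, z | x^{p^n} = y^{p^n} = z^{p^r} = 1, [x,y] = z, [x,z] = [y,z] = 1⟩ (where [a,b] = aba⁻¹b⁻¹) is a purely strongly real Beauville group: it admits a Beauville structure, and every Beauville structure of G is strongly real. -/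
/-- `beauvilleSigma x y` is Σ(x,y): the set of all conjugates of all powers of
`x`, `y` and `x*y` in the group `G`. -/
def beauvilleSigma {G : Type*} [Group G] (x y : G) : Set G :=
  {a | ∃ (i : ℕ) (g : G),
      a = g * x ^ i * g⁻¹ ∨ a = g * y ^ i * g⁻¹ ∨ a = g * (x * y) ^ i * g⁻¹}

/-- `{(x₁,y₁),(x₂,y₂)}` is a Beauville structure for `G`:
both pairs generate `G` and `Σ(x₁,y₁) ∩ Σ(x₂,y₂) = {1}`. -/
def IsBeauvilleStructure {G : Type*} [Group G] (x₁ y₁ x₂ y₂ : G) : Prop :=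
  Subgroup.closure {x₁, y₁} = ⊤ ∧ Subgroup.closure {x₂, y₂} = ⊤ ∧
    beauvilleSigma x₁ y₁ ∩ beauvilleSigma x₂ y₂ = {1}

/-- A Beauville structure `{(x₁,y₁),(x₂,y₂)}` is strongly real if there are an
automorphism `φ` of `G` and elements `g₁ g₂ : G` with
`gᵢ * φ xᵢ * gᵢ⁻¹ = xᵢ⁻¹` and `gᵢ * φ yᵢ * gᵢ⁻¹ = yᵢ⁻¹` for `i = 1, 2`. -/
def IsStronglyRealStructure {G : Type*} [Group G] (x₁ y₁ x₂ y₂ : G) : Prop :=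
  ∃ (φ : G ≃* G) (g₁ g₂ : G),
    g₁ * φ x₁ * g₁⁻¹ = x₁⁻¹ ∧ g₁ * φ y₁ * g₁⁻¹ = y₁⁻¹ ∧
    g₂ * φ x₂ * g₂⁻¹ = x₂⁻¹ ∧ g₂ * φ y₂ * g₂⁻¹ = y₂⁻¹

/-- The relators `x^{p^n}, y^{p^n}, z^{p^r}, [x,y]z⁻¹, [x,z], [y,z]` (with
`[a,b] = aba⁻¹b⁻¹`) in the free group on three generators `x = 0`, `y = 1`, `z = 2`. -/
def heisenbergRels (p n r : ℕ) : Set (FreeGroup (Fin 3)) :=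
  { FreeGroup.of 0 ^ p ^ n, FreeGroup.of 1 ^ p ^ n, FreeGroup.of 2 ^ p ^ r,
    FreeGroup.of 0 * FreeGroup.of 1 * (FreeGroup.of 0)⁻¹ * (FreeGroup.of 1)⁻¹ *
      (FreeGroup.of 2)⁻¹,
    FreeGroup.of 0 * FreeGroup.of 2 * (FreeGroup.of 0)⁻¹ * (FreeGroup.of 2)⁻¹,
    FreeGroup.of 1 * FreeGroup.of 2 * (FreeGroup.of 1)⁻¹ * (FreeGroup.of 2)⁻¹ }

/-- The group `G = ⟨x, y, z ∣ x^{p^n} = y^{p^n} = z^{p^r} = 1, [x,y] = z,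
[x,z] = [y,z] = 1⟩`. -/
abbrev heisenbergGroup (p n r : ℕ) : Type := PresentedGroup (heisenbergRels p n r)

/-- The generator `x` of `heisenbergGroup p n r`. -/
def heisX (p n r : ℕ) : heisenbergGroup p n r := PresentedGroup.of 0

/-- The generator `y` of `heisenbergGroup p n r`. -/
def heisY (p n r : ℕ) : heisenbergGroup p n r := PresentedGroup.of 1

/-- The generator `z` of `heisenbergGroup p n r`. -/
def heisZ (p n r : ℕ) : heisenbergGroup p n r := PresentedGroup.of 2

/-!
Model the group as triples `(a, b, c) ∈ (ℤ/p^n)² × ℤ/p^r` standing for `y^b x^a z^c`. Conjugation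
fixes `(a, b)` and shifts `c` by the determinant `det g w` of the `(a, b)`-parts, and a pair
generates exactly when its determinant is a unit.

If `g u^i g⁻¹ = g' u'^j g'⁻¹` with `det u u'` a unit, then `i (a, b) = j (a', b')` forces
`j ≡ 0 (mod p^n)`, and `p^n` kills everything as `p` is odd. For `(x, y), (y² x, y⁻¹ x)` all
nine relevant determinants are `±1, ±2`, while the second pair has determinant `-3`.

The automorphism `(a, b, c) ↦ (-a, -b, c)` inverts the `(a, b)`-part of every element; the
missing correction of `c` for a generating pair is two linear equations in the conjugator,
solvable because the determinant of the pair is a unit.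
-/

lemma mem_beauvilleSigma_iff {G : Type*} [Group G] {x y s : G} :
    s ∈ beauvilleSigma x y ↔
      ∃ (i : ℕ) (g : G), ∃ u ∈ ({x, y, x * y} : Set G), s = g * u ^ i * g⁻¹ := by
  simp only [beauvilleSigma, Set.mem_ofPred_eq, Set.mem_insert_iff, Set.mem_singleton_iff,
    exists_eq_or_imp, exists_eq_left]

section MulEquiv

variable {G H : Type*} [Group G] [Group H] (e : G ≃* H)

lemma preimage_beauvilleSigma_map (x y : G) :
    e ⁻¹' beauvilleSigma (e x) (e y) = beauvilleSigma x y := by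
  ext s
  simp only [Set.mem_preimage, beauvilleSigma, Set.mem_ofPred_eq, e.surjective.exists]
  simp only [← map_mul, ← map_pow, ← map_inv, e.apply_eq_iff_eq]

lemma closure_pair_map_eq_top {x y : G} (h : Subgroup.closure {x, y} = ⊤) :
    Subgroup.closure {e x, e y} = ⊤ := by
  rw [← Set.image_pair, ← e.coe_toMonoidHom, ← MonoidHom.map_closure, h,
    Subgroup.map_top_of_surjective _ e.surjective]

lemma IsBeauvilleStructure.map {x₁ y₁ x₂ y₂ : G} (h : IsBeauvilleStructure x₁ y₁ x₂ y₂) :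
    IsBeauvilleStructure (e x₁) (e y₁) (e x₂) (e y₂) := by
  obtain ⟨h₁, h₂, hinter⟩ := h
  refine ⟨closure_pair_map_eq_top e h₁, closure_pair_map_eq_top e h₂, ?_⟩
  apply Set.preimage_injective.mpr e.surjective
  rw [Set.preimage_inter, preimage_beauvilleSigma_map, preimage_beauvilleSigma_map, hinter]
  ext
  simp

lemma IsStronglyRealStructure.map {x₁ y₁ x₂ y₂ : G} (h : IsStronglyRealStructure x₁ y₁ x₂ y₂) :
    IsStronglyRealStructure (e x₁) (e y₁) (e x₂) (e y₂) := by
  obtain ⟨φ, g₁, g₂, h⟩ := h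
  refine ⟨(e.symm.trans φ).trans e, e g₁, e g₂, ?_⟩
  simpa only [MulEquiv.trans_apply, MulEquiv.symm_apply_apply, ← map_mul, ← map_inv,
    e.apply_eq_iff_eq] using h

end MulEquiv

lemma pow_eq_pow_of_natCast_eq {M : Type*} [Monoid M] {x : M} {m i j : ℕ} (hx : x ^ m = 1)
    (h : (i : ZMod m) = j) : x ^ i = x ^ j := by
  rw [pow_eq_pow_mod i hx, pow_eq_pow_mod j hx, (ZMod.natCast_eq_natCast_iff' i j m).mp h]

section CentralCommutator

variable {G : Type*} [Group G] {x y z : G}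

lemma mul_pow_eq_pow_mul_mul_pow (hzy : Commute z y) (hxy : x * y = y * x * z) (b : ℕ) :
    x * y ^ b = y ^ b * x * z ^ b := by
  induction b with
  | zero => simp
  | succ b ih =>
    calc x * y ^ (b + 1) = y ^ b * x * (z ^ b * y) := by rw [pow_succ, ← mul_assoc, ih]; group
      _ = y ^ b * (x * y) * z ^ b := by rw [(hzy.pow_left b).eq]; group
      _ = y ^ (b + 1) * x * z ^ (b + 1) := by rw [hxy]; group

lemma pow_mul_pow_eq_pow_mul_pow_mul_pow (hzx : Commute z x) (hzy : Commute z y)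
    (hxy : x * y = y * x * z) (a b : ℕ) :
    x ^ a * y ^ b = y ^ b * x ^ a * z ^ (a * b) := by
  induction a with
  | zero => simp
  | succ a ih =>
    calc x ^ (a + 1) * y ^ b = x * y ^ b * x ^ a * z ^ (a * b) := by
          rw [pow_succ', mul_assoc, ih]; group
      _ = y ^ b * x * (z ^ b * x ^ a) * z ^ (a * b) := by
          rw [mul_pow_eq_pow_mul_mul_pow hzy hxy]; group
      _ = y ^ b * x ^ (a + 1) * z ^ ((a + 1) * b) := by
          rw [(hzx.pow_pow b a).eq]; group

lemma normal_form_mul (hzx : Commute z x) (hzy : Commute z y) (hxy : x * y = y * x * z)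
    (a₁ b₁ c₁ a₂ b₂ c₂ : ℕ) :
    y ^ b₁ * x ^ a₁ * z ^ c₁ * (y ^ b₂ * x ^ a₂ * z ^ c₂) =
      y ^ (b₁ + b₂) * x ^ (a₁ + a₂) * z ^ (a₁ * b₂ + c₁ + c₂) := by
  calc y ^ b₁ * x ^ a₁ * z ^ c₁ * (y ^ b₂ * x ^ a₂ * z ^ c₂)
        = y ^ b₁ * x ^ a₁ * (z ^ c₁ * (y ^ b₂ * x ^ a₂)) * z ^ c₂ := by group
    _ = y ^ b₁ * (x ^ a₁ * y ^ b₂) * x ^ a₂ * z ^ c₁ * z ^ c₂ := by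
          rw [((hzy.pow_pow c₁ b₂).mul_right (hzx.pow_pow c₁ a₂)).eq]; group
    _ = y ^ (b₁ + b₂) * x ^ a₁ * (z ^ (a₁ * b₂) * x ^ a₂) * z ^ c₁ * z ^ c₂ := by
          rw [pow_mul_pow_eq_pow_mul_pow_mul_pow hzx hzy hxy]; group
    _ = y ^ (b₁ + b₂) * x ^ (a₁ + a₂) * z ^ (a₁ * b₂ + c₁ + c₂) := by
          rw [(hzx.pow_pow _ a₂).eq]; group

end CentralCommutator

/-- `⟨a, b, c⟩` stands for `y ^ b * x ^ a * z ^ c`, multiplied according to `normal_form_mul`. -/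
@[ext]
structure ZModHeis (m k : ℕ) where
  a : ZMod m
  b : ZMod m
  c : ZMod k

namespace ZModHeis

variable {m k : ℕ}

instance : One (ZModHeis m k) := ⟨⟨0, 0, 0⟩⟩

@[simp] lemma one_a : (1 : ZModHeis m k).a = 0 := rfl
@[simp] lemma one_b : (1 : ZModHeis m k).b = 0 := rfl
@[simp] lemma one_c : (1 : ZModHeis m k).c = 0 := rfl

def det (w w' : ZModHeis m k) : ZMod m := w.a * w'.b - w'.a * w.b

lemma exists_det_eq {w w' : ZModHeis m k} (h : IsUnit (det w w')) (s s' : ZMod m) :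
    ∃ g : ZModHeis m k, det g w = s ∧ det g w' = s' := by
  obtain ⟨D, hD⟩ := h
  have hDinv : (↑D⁻¹ : ZMod m) * (w.a * w'.b - w'.a * w.b) = 1 := by
    rw [← det, ← hD, D.inv_mul]
  refine ⟨⟨↑D⁻¹ * (w.a * s' - w'.a * s), ↑D⁻¹ * (w.b * s' - w'.b * s), 0⟩, ?_, ?_⟩ <;>
    simp only [det]
  · linear_combination s * hDinv
  · linear_combination s' * hDinv

variable [Fact (k ∣ m)]

def red : ZMod m →+* ZMod k := ZMod.castHom Fact.out (ZMod k)

instance : Mul (ZModHeis m k) :=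
  ⟨fun w w' => ⟨w.a + w'.a, w.b + w'.b, w.c + w'.c + red (w.a * w'.b)⟩⟩
instance : Inv (ZModHeis m k) := ⟨fun w => ⟨-w.a, -w.b, -w.c + red (w.a * w.b)⟩⟩

@[simp] lemma mul_a (w w' : ZModHeis m k) : (w * w').a = w.a + w'.a := rfl
@[simp] lemma mul_b (w w' : ZModHeis m k) : (w * w').b = w.b + w'.b := rfl
@[simp] lemma mul_c (w w' : ZModHeis m k) : (w * w').c = w.c + w'.c + red (w.a * w'.b) := rfl
@[simp] lemma inv_a (w : ZModHeis m k) : w⁻¹.a = -w.a := rfl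
@[simp] lemma inv_b (w : ZModHeis m k) : w⁻¹.b = -w.b := rfl
@[simp] lemma inv_c (w : ZModHeis m k) : w⁻¹.c = -w.c + red (w.a * w.b) := rfl

instance : Group (ZModHeis m k) where
  mul_assoc _ _ _ := by ext <;> simp only [mul_a, mul_b, mul_c, map_add, map_mul] <;> ring
  one_mul _ := by ext <;> simp
  mul_one _ := by ext <;> simp
  inv_mul_cancel _ := by ext <;> simp only [mul_a, mul_b, mul_c, inv_a, inv_b, inv_c, one_a,
    one_b, one_c, map_mul, map_neg] <;> ring

lemma pow_eq (w : ZModHeis m k) (j : ℕ) :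
    w ^ j = ⟨(j : ZMod m) * w.a, (j : ZMod m) * w.b,
      (j : ZMod k) * w.c + (j.choose 2 : ZMod k) * red (w.a * w.b)⟩ := by
  induction j with
  | zero => ext <;> simp
  | succ j ih =>
    rw [pow_succ, ih]
    ext <;> simp only [mul_a, mul_b, mul_c, Nat.choose_succ_succ, Nat.choose_one_right, map_mul,
      map_natCast] <;> push_cast <;> ring

@[simp] lemma pow_a (w : ZModHeis m k) (j : ℕ) : (w ^ j).a = (j : ZMod m) * w.a := by rw [pow_eq]
@[simp] lemma pow_b (w : ZModHeis m k) (j : ℕ) : (w ^ j).b = (j : ZMod m) * w.b := by rw [pow_eq]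

lemma conj_eq (g w : ZModHeis m k) : g * w * g⁻¹ = ⟨w.a, w.b, w.c + red (det g w)⟩ := by
  ext <;> simp only [det, mul_a, mul_b, mul_c, inv_a, inv_b, inv_c, map_add, map_sub, map_mul,
    map_neg] <;> ring

lemma commutator_eq (w w' : ZModHeis m k) :
    w * w' * w⁻¹ * w'⁻¹ = ⟨0, 0, red (det w w')⟩ := by
  ext <;> simp only [det, mul_a, mul_b, mul_c, inv_a, inv_b, inv_c, map_add, map_sub, map_mul,
    map_neg] <;> ring

lemma pow_eq_one_of_dvd (hm : Odd m) (w : ZModHeis m k) {j : ℕ} (hj : m ∣ j) : w ^ j = 1 := by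
  obtain ⟨t, rfl⟩ := hj
  suffices w ^ m = 1 by rw [pow_mul, this, one_pow]
  obtain ⟨l, hl⟩ := hm
  have hchoose : m.choose 2 = m * l := by
    rw [Nat.choose_two_right, hl, Nat.add_sub_cancel, mul_left_comm,
      Nat.mul_div_cancel_left _ two_pos]
  have hmk : (m : ZMod k) = 0 := (ZMod.natCast_eq_zero_iff m k).mpr Fact.out
  ext <;> simp [pow_eq, hchoose, hmk]

lemma isUnit_det_of_closure_eq_top {w w' : ZModHeis m k}
    (h : Subgroup.closure {w, w'} = ⊤) : IsUnit (det w w') := by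
  let π : ZModHeis m k →* Multiplicative (ZMod m × ZMod m) :=
    MonoidHom.mk' (fun t => Multiplicative.ofAdd (t.a, t.b)) fun _ _ => rfl
  have hspan (t : ZModHeis m k) :
      ∃ i j : ℤ, i * w.a + j * w'.a = t.a ∧ i * w.b + j * w'.b = t.b := by
    have ht : π t ∈ Subgroup.closure {π w, π w'} := by
      rw [← Set.image_pair, ← MonoidHom.map_closure, h]
      exact ⟨t, trivial, rfl⟩
    obtain ⟨i, j, hij⟩ := Subgroup.mem_closure_pair.mp ht
    refine ⟨i, j, ?_, ?_⟩
    · simpa [π, zsmul_eq_mul] using congrArg (fun s => s.toAdd.1) hij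
    · simpa [π, zsmul_eq_mul] using congrArg (fun s => s.toAdd.2) hij
  obtain ⟨i, j, h₁, h₂⟩ := hspan ⟨1, 0, 0⟩
  obtain ⟨i', j', h₁', h₂'⟩ := hspan ⟨0, 1, 0⟩
  refine IsUnit.of_mul_eq_one ((i * j' - j * i' : ℤ) : ZMod m) ?_
  simp only [det]
  push_cast
  linear_combination (i' * w.b + j' * w'.b) * h₁ + h₂' - (i' * w.a + j' * w'.a) * h₂

lemma closure_eq_top_of_isUnit_det [NeZero m] {w w' : ZModHeis m k} (h : IsUnit (det w w')) :
    Subgroup.closure {w, w'} = ⊤ := by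
  set S := Subgroup.closure ({w, w'} : Set (ZModHeis m k))
  have hw : w ∈ S := Subgroup.subset_closure (by simp)
  have hw' : w' ∈ S := Subgroup.subset_closure (by simp)
  obtain ⟨D, hD⟩ := h
  have hcentre (γ : ZMod k) : (⟨0, 0, γ⟩ : ZModHeis m k) ∈ S := by
    obtain ⟨s, rfl⟩ := ZMod.ringHom_surjective (red : ZMod m →+* ZMod k) γ
    have : (⟨0, 0, red s⟩ : ZModHeis m k) = (w * w' * w⁻¹ * w'⁻¹) ^ (s * ↑D⁻¹).val := by
      rw [commutator_eq, pow_eq]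
      ext <;> simp only [mul_zero, map_zero, add_zero]
      rw [← map_natCast (red (m := m)), ZMod.natCast_zmod_val, ← map_mul, ← hD, mul_assoc,
        D.inv_mul, mul_one]
    rw [this]
    exact pow_mem (mul_mem (mul_mem (mul_mem hw hw') (inv_mem hw)) (inv_mem hw')) _
  rw [Subgroup.eq_top_iff']
  rintro ⟨A, B, C⟩
  set t := w ^ (↑D⁻¹ * (A * w'.b - B * w'.a)).val * w' ^ (↑D⁻¹ * (B * w.a - A * w.b)).val
  have ht : (⟨A, B, C⟩ : ZModHeis m k) = t * ⟨0, 0, C - t.c⟩ := by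
    have hDinv : (↑D⁻¹ : ZMod m) * (w.a * w'.b - w'.a * w.b) = 1 := by
      rw [← det, ← hD, D.inv_mul]
    ext
    · simp only [t, mul_a, pow_a, ZMod.natCast_zmod_val]; linear_combination (-A) * hDinv
    · simp only [t, mul_b, pow_b, ZMod.natCast_zmod_val]; linear_combination (-B) * hDinv
    · simp
  rw [ht]
  exact mul_mem (mul_mem (pow_mem hw _) (pow_mem hw' _)) (hcentre _)

lemma conj_pow_eq_one_of_conj_pow_eq (hm : Odd m) {u u' g g' : ZModHeis m k} {i j : ℕ}
    (hd : IsUnit (det u u')) (h : g * u ^ i * g⁻¹ = g' * u' ^ j * g'⁻¹) :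
    g' * u' ^ j * g'⁻¹ = 1 := by
  have ha := congrArg a h
  have hb := congrArg b h
  simp only [conj_eq, pow_a, pow_b] at ha hb
  have hj : (j : ZMod m) = 0 :=
    hd.mul_left_eq_zero.mp (by simp only [det]; linear_combination u.b * ha - u.a * hb)
  rw [pow_eq_one_of_dvd hm u' ((ZMod.natCast_eq_zero_iff j m).mp hj), mul_one, mul_inv_cancel]

lemma beauvilleSigma_inter_eq_one (hm : Odd m) {x₁ y₁ x₂ y₂ : ZModHeis m k}
    (h : ∀ u ∈ ({x₁, y₁, x₁ * y₁} : Set _), ∀ u' ∈ ({x₂, y₂, x₂ * y₂} : Set _),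
      IsUnit (det u u')) :
    beauvilleSigma x₁ y₁ ∩ beauvilleSigma x₂ y₂ = {1} := by
  refine Set.eq_singleton_iff_unique_mem.mpr ⟨⟨⟨0, 1, by simp⟩, ⟨0, 1, by simp⟩⟩, ?_⟩
  rintro s ⟨hs₁, hs₂⟩
  obtain ⟨i, g, u, hu, rfl⟩ := mem_beauvilleSigma_iff.mp hs₁
  obtain ⟨j, g', u', hu', hs⟩ := mem_beauvilleSigma_iff.mp hs₂
  rw [hs]
  exact conj_pow_eq_one_of_conj_pow_eq hm (h u hu u' hu') hs

lemma isBeauvilleStructure_of_coprime_six (hm : Nat.Coprime 6 m) :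
    IsBeauvilleStructure (⟨1, 0, 0⟩ : ZModHeis m k) ⟨0, 1, 0⟩ ⟨1, 2, 0⟩ ⟨1, -1, 0⟩ := by
  have : NeZero m := ⟨by rintro rfl; simp at hm⟩
  have hunit {d : ℕ} (hd : d ∣ 6) : IsUnit (d : ZMod m) :=
    (ZMod.isUnit_iff_coprime d m).mpr (hm.coprime_dvd_left hd)
  have h2 : IsUnit (2 : ZMod m) := by exact_mod_cast hunit (d := 2) (by norm_num)
  have h3 : IsUnit (3 : ZMod m) := by exact_mod_cast hunit (d := 3) (by norm_num)
  refine ⟨closure_eq_top_of_isUnit_det (by simp [det]), closure_eq_top_of_isUnit_det ?_,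
    beauvilleSigma_inter_eq_one (Nat.coprime_two_left.mp (hm.coprime_dvd_left (by norm_num))) ?_⟩
  · simpa [det, show (-1 - 2 : ZMod m) = -3 by ring] using h3.neg
  · simp only [Set.mem_insert_iff, Set.mem_singleton_iff]
    rintro u (rfl | rfl | rfl) u' (rfl | rfl | rfl) <;> norm_num [det, h2]

def negAB : ZModHeis m k ≃* ZModHeis m k where
  toFun w := ⟨-w.a, -w.b, w.c⟩
  invFun w := ⟨-w.a, -w.b, w.c⟩
  left_inv w := by simp
  right_inv w := by simp
  map_mul' w w' := by ext <;> simp only [mul_a, mul_b, mul_c, neg_mul_neg] <;> ring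

lemma conj_negAB_eq (g w : ZModHeis m k) :
    g * negAB w * g⁻¹ = ⟨-w.a, -w.b, w.c - red (det g w)⟩ := by
  rw [conj_eq]
  ext <;> simp only [negAB, MulEquiv.coe_mk, Equiv.coe_fn_mk, det, map_sub, map_mul, map_neg]
  ring

lemma exists_conj_negAB_eq_inv {w w' : ZModHeis m k} (h : IsUnit (det w w')) :
    ∃ g : ZModHeis m k, g * negAB w * g⁻¹ = w⁻¹ ∧ g * negAB w' * g⁻¹ = w'⁻¹ := by
  obtain ⟨s, hs⟩ := ZMod.ringHom_surjective (red (m := m)) (2 * w.c - red (w.a * w.b))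
  obtain ⟨s', hs'⟩ := ZMod.ringHom_surjective (red (m := m)) (2 * w'.c - red (w'.a * w'.b))
  obtain ⟨g, hg, hg'⟩ := exists_det_eq h s s'
  refine ⟨g, ?_, ?_⟩
  · rw [conj_negAB_eq, hg, hs]
    ext <;> simp only [inv_a, inv_b, inv_c]
    ring
  · rw [conj_negAB_eq, hg', hs']
    ext <;> simp only [inv_a, inv_b, inv_c]
    ring

lemma isStronglyRealStructure_of_closure_eq_top {x₁ y₁ x₂ y₂ : ZModHeis m k}
    (h₁ : Subgroup.closure {x₁, y₁} = ⊤) (h₂ : Subgroup.closure {x₂, y₂} = ⊤) :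
    IsStronglyRealStructure x₁ y₁ x₂ y₂ := by
  obtain ⟨g₁, hx₁, hy₁⟩ := exists_conj_negAB_eq_inv (isUnit_det_of_closure_eq_top h₁)
  obtain ⟨g₂, hx₂, hy₂⟩ := exists_conj_negAB_eq_inv (isUnit_det_of_closure_eq_top h₂)
  exact ⟨negAB, g₁, g₂, hx₁, hy₁, hx₂, hy₂⟩

lemma mk_natCast_eq (a b c : ℕ) :
    (⟨a, b, c⟩ : ZModHeis m k) = ⟨0, 1, 0⟩ ^ b * ⟨1, 0, 0⟩ ^ a * ⟨0, 0, 1⟩ ^ c := by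
  ext <;> simp [pow_eq]

variable [NeZero m]

lemma red_eq_natCast_val (s : ZMod m) : red s = (s.val : ZMod k) := ZMod.cast_eq_val s

variable [NeZero k]

variable {G : Type*} [Group G] {x y z : G} (hx : x ^ m = 1) (hy : y ^ m = 1) (hz : z ^ k = 1)
  (hzx : Commute z x) (hzy : Commute z y) (hxy : x * y = y * x * z)

def lift : ZModHeis m k →* G :=
  MonoidHom.mk' (fun w => y ^ w.b.val * x ^ w.a.val * z ^ w.c.val) fun w w' => by
    rw [normal_form_mul hzx hzy hxy, pow_eq_pow_of_natCast_eq hy (j := w.b.val + w'.b.val),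
      pow_eq_pow_of_natCast_eq hx (j := w.a.val + w'.a.val),
      pow_eq_pow_of_natCast_eq hz (j := w.a.val * w'.b.val + w.c.val + w'.c.val)] <;>
    simp only [mul_a, mul_b, mul_c, Nat.cast_add, Nat.cast_mul, ZMod.natCast_zmod_val,
      ← red_eq_natCast_val, map_mul]
    ring

lemma lift_natCast (a b c : ℕ) :
    lift hx hy hz hzx hzy hxy ⟨a, b, c⟩ = y ^ b * x ^ a * z ^ c := by
  rw [lift, MonoidHom.mk'_apply, pow_eq_pow_of_natCast_eq hy (ZMod.natCast_zmod_val _),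
    pow_eq_pow_of_natCast_eq hx (ZMod.natCast_zmod_val _),
    pow_eq_pow_of_natCast_eq hz (ZMod.natCast_zmod_val _)]

end ZModHeis

namespace HeisenbergGroup

variable (p n r : ℕ)

lemma heisX_pow : heisX p n r ^ p ^ n = 1 := by
  have h := PresentedGroup.one_of_mem (x := FreeGroup.of 0 ^ p ^ n)
    (show _ ∈ heisenbergRels p n r by simp [heisenbergRels])
  rwa [map_pow] at h

lemma heisY_pow : heisY p n r ^ p ^ n = 1 := by
  have h := PresentedGroup.one_of_mem (x := FreeGroup.of 1 ^ p ^ n)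
    (show _ ∈ heisenbergRels p n r by simp [heisenbergRels])
  rwa [map_pow] at h

lemma heisZ_pow : heisZ p n r ^ p ^ r = 1 := by
  have h := PresentedGroup.one_of_mem (x := FreeGroup.of 2 ^ p ^ r)
    (show _ ∈ heisenbergRels p n r by simp [heisenbergRels])
  rwa [map_pow] at h

lemma commute_heisZ_heisX : Commute (heisZ p n r) (heisX p n r) := by
  have h := PresentedGroup.one_of_mem
    (x := FreeGroup.of 0 * FreeGroup.of 2 * (FreeGroup.of 0)⁻¹ * (FreeGroup.of 2)⁻¹)
    (show _ ∈ heisenbergRels p n r by simp [heisenbergRels])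
  simp only [map_mul, map_inv, mul_inv_eq_iff_eq_mul, one_mul] at h
  exact h.symm

lemma commute_heisZ_heisY : Commute (heisZ p n r) (heisY p n r) := by
  have h := PresentedGroup.one_of_mem
    (x := FreeGroup.of 1 * FreeGroup.of 2 * (FreeGroup.of 1)⁻¹ * (FreeGroup.of 2)⁻¹)
    (show _ ∈ heisenbergRels p n r by simp [heisenbergRels])
  simp only [map_mul, map_inv, mul_inv_eq_iff_eq_mul, one_mul] at h
  exact h.symm

lemma heisX_mul_heisY : heisX p n r * heisY p n r = heisY p n r * heisX p n r * heisZ p n r := by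
  have h := PresentedGroup.one_of_mem
    (x := FreeGroup.of 0 * FreeGroup.of 1 * (FreeGroup.of 0)⁻¹ * (FreeGroup.of 1)⁻¹ *
      (FreeGroup.of 2)⁻¹)
    (show _ ∈ heisenbergRels p n r by simp [heisenbergRels])
  simp only [map_mul, map_inv, mul_inv_eq_iff_eq_mul, one_mul] at h
  exact h.trans ((commute_heisZ_heisY p n r).mul_right (commute_heisZ_heisX p n r)).eq

variable [Fact (p ^ r ∣ p ^ n)]

def toZModHeis : heisenbergGroup p n r →* ZModHeis (p ^ n) (p ^ r) :=
  PresentedGroup.toGroup (f := ![⟨1, 0, 0⟩, ⟨0, 1, 0⟩, ⟨0, 0, 1⟩]) <| by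
    simp only [heisenbergRels, Set.mem_insert_iff, Set.mem_singleton_iff]
    rintro w (rfl | rfl | rfl | rfl | rfl | rfl) <;>
      simp only [map_mul, map_pow, map_inv, FreeGroup.lift_apply_of] <;>
      ext <;> simp [ZModHeis.pow_eq]

variable [NeZero p]

def ofZModHeis : ZModHeis (p ^ n) (p ^ r) →* heisenbergGroup p n r :=
  ZModHeis.lift (heisX_pow p n r) (heisY_pow p n r) (heisZ_pow p n r) (commute_heisZ_heisX p n r)
    (commute_heisZ_heisY p n r) (heisX_mul_heisY p n r)

lemma ofZModHeis_natCast (a b c : ℕ) :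
    ofZModHeis p n r ⟨a, b, c⟩ = heisY p n r ^ b * heisX p n r ^ a * heisZ p n r ^ c :=
  ZModHeis.lift_natCast _ _ _ _ _ _ a b c

lemma toZModHeis_ofZModHeis (w : ZModHeis (p ^ n) (p ^ r)) :
    toZModHeis p n r (ofZModHeis p n r w) = w := by
  obtain ⟨a, b, c⟩ := w
  rw [← ZMod.natCast_zmod_val a, ← ZMod.natCast_zmod_val b, ← ZMod.natCast_zmod_val c,
    ofZModHeis_natCast, ZModHeis.mk_natCast_eq]
  simp only [map_mul, map_pow, heisX, heisY, heisZ, toZModHeis, PresentedGroup.toGroup.of]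
  rfl

lemma ofZModHeis_toZModHeis (g : heisenbergGroup p n r) :
    ofZModHeis p n r (toZModHeis p n r g) = g := by
  refine DFunLike.congr_fun (PresentedGroup.ext (φ := (ofZModHeis p n r).comp (toZModHeis p n r))
    (ψ := MonoidHom.id _) fun i => ?_) g
  fin_cases i
  · simpa [toZModHeis, heisX] using ofZModHeis_natCast p n r 1 0 0
  · simpa [toZModHeis, heisY] using ofZModHeis_natCast p n r 0 1 0
  · simpa [toZModHeis, heisZ] using ofZModHeis_natCast p n r 0 0 1

def equivZModHeis : heisenbergGroup p n r ≃* ZModHeis (p ^ n) (p ^ r) :=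
  (toZModHeis p n r).toMulEquiv (ofZModHeis p n r) (MonoidHom.ext (ofZModHeis_toZModHeis p n r))
    (MonoidHom.ext (toZModHeis_ofZModHeis p n r))

end HeisenbergGroup

theorem heisenbergGroup_purely_strongly_real_general
    (p n r : ℕ) (hp : p.Prime) (hp5 : 5 ≤ p) (hrn : r ≤ n) :
    (∃ a b c d : heisenbergGroup p n r, IsBeauvilleStructure a b c d) ∧
    ∀ a b c d : heisenbergGroup p n r,
      IsBeauvilleStructure a b c d → IsStronglyRealStructure a b c d := by
  have : Fact (p ^ r ∣ p ^ n) := ⟨pow_dvd_pow p hrn⟩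
  have : NeZero p := ⟨hp.ne_zero⟩
  have hcop : Nat.Coprime 6 (p ^ n) :=
    .pow_right n <| Nat.Coprime.mul_left ((Nat.coprime_primes Nat.prime_two hp).mpr (by omega))
      ((Nat.coprime_primes Nat.prime_three hp).mpr (by omega))
  let e := HeisenbergGroup.equivZModHeis p n r
  refine ⟨⟨_, _, _, _, (ZModHeis.isBeauvilleStructure_of_coprime_six hcop).map e.symm⟩,
    fun a b c d h => ?_⟩
  have hmodel := ZModHeis.isStronglyRealStructure_of_closure_eq_top (h.map e).1 (h.map e).2.1
  simpa using hmodel.map e.symm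

/-- for a prime `p ≥ 5` and integers `n ≥ r ≥ 1`, the group
`G = ⟨x, y, z ∣ x^{p^n} = y^{p^n} = z^{p^r} = 1, [x,y] = z, [x,z] = [y,z] = 1⟩` is a
purely strongly real Beauville group: it admits a Beauville structure and every
Beauville structure of it is strongly real. -/
theorem heisenbergGroup_purely_strongly_real
    (p n r : ℕ) (hp : p.Prime) (hp5 : 5 ≤ p) (hr : 1 ≤ r) (hrn : r ≤ n) :
    (∃ a b c d : heisenbergGroup p n r, IsBeauvilleStructure a b c d) ∧
    ∀ a b c d : heisenbergGroup p n r,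
      IsBeauvilleStructure a b c d → IsStronglyRealStructure a b c d :=
  heisenbergGroup_purely_strongly_real_general p n r hp hp5 hrn
end

section
/- Let p ≥ 5 be a prime, let n ≥ r ≥ 1 be integers, and let G = ⟨x, y, z | x^{p^n} = y^{p^n} = z^{p^r} = 1, [x,y] = z, [x,z] = [y,z] = 1⟩. If g ∈ G does not lie in the Frattini subgroup Φ(G), then the conjugacy class of g in G is exactly the set {g z^i : 0 ≤ i ≤ p^r − 1}. -/
/-!
Every element of `G` has a normal form `x^α y^β z^γ`, and since `z = [x, y]` is central,
conjugating `x^α y^β z^γ` by `x^a y^b z^c` multiplies it by `z^(aβ - αb)`. So conjugacy classes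
lie in cosets of `⟨z⟩`. Since `G` is a finite `p`-group, every maximal subgroup is normal of
index `p` and so contains all `p`-th powers and all commutators; hence `x^p, y^p, z ∈ Φ(G)`, and
`g ∉ Φ(G)` forces `p ∤ α` or `p ∤ β`. Then `aβ - αb` takes every value modulo `p^r`.
-/

open scoped commutatorElement

section Frattini
variable {G : Type*} [Group G]

theorem mem_frattini_iff {g : G} : g ∈ frattini G ↔ ∀ M : Subgroup G, IsCoatom M → g ∈ M := by
  simp [frattini, Order.radical, Subgroup.mem_iInf]

theorem isSimpleGroup_quotient_of_isCoatom {M : Subgroup G} [M.Normal] (hM : IsCoatom M) :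
    IsSimpleGroup (G ⧸ M) :=
  have := Set.isSimpleOrder_Ici_iff_isCoatom.mpr hM
  have : IsSimpleOrder (Subgroup (G ⧸ M)) :=
    OrderIso.isSimpleOrder (β := Set.Ici M) (QuotientGroup.comapMk'OrderIso M)
  { exists_pair_ne := Subgroup.nontrivial_iff.mp inferInstance |>.exists_pair_ne
    eq_bot_or_eq_top_of_normal := fun H _ => IsSimpleOrder.eq_bot_or_eq_top H }

theorem commutator_mem_frattini [Group.IsNilpotent G] (a b : G) : ⁅a, b⁆ ∈ frattini G := by
  refine mem_frattini_iff.mpr fun M hM => ?_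
  have := Subgroup.NormalizerCondition.normal_of_coatom M
    Group.normalizerCondition_of_isNilpotent hM
  have := isSimpleGroup_quotient_of_isCoatom hM
  rw [← QuotientGroup.eq_one_iff, commutatorElement_def]
  simp only [QuotientGroup.mk_mul, QuotientGroup.mk_inv]
  rw [mul_comm (a : G ⧸ M)]
  group

theorem IsPGroup.pow_mem_frattini [Finite G] {p : ℕ} [Fact p.Prime] (hG : IsPGroup p G)
    (g : G) : g ^ p ∈ frattini G := by
  refine mem_frattini_iff.mpr fun M hM => ?_
  have := hG.isNilpotent
  have := Subgroup.NormalizerCondition.normal_of_coatom M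
    Group.normalizerCondition_of_isNilpotent hM
  have := isSimpleGroup_quotient_of_isCoatom hM
  have hcard : Nat.card (G ⧸ M) = p := by
    have hprime := IsSimpleGroup.prime_card (α := G ⧸ M)
    have hdvd := ((hG.to_quotient M).card_eq_or_dvd).resolve_left hprime.ne_one
    exact ((Nat.prime_dvd_prime_iff_eq Fact.out hprime).mp hdvd).symm
  rw [← QuotientGroup.eq_one_iff, QuotientGroup.mk_pow, ← hcard]
  exact pow_card_eq_one'

end Frattini

section ClassTwo
variable {G : Type*} [Group G] {x y z : G}
  (hxz : Commute x z) (hyz : Commute y z) (hxy : ⁅x, y⁆ = z)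
include hxz hyz hxy

theorem zpow_mul_zpow_of_commutator_eq (a b : ℤ) :
    y ^ b * x ^ a = x ^ a * y ^ b * z ^ (-(a * b)) := by
  have hyx : SemiconjBy y x (z⁻¹ * x) := by
    rw [SemiconjBy, ← hxy, commutatorElement_def]; group
  have hyxa : SemiconjBy y (x ^ a) (z ^ (-a) * x ^ a) := by
    have := hyx.zpow_right a
    rwa [hxz.inv_right.symm.mul_zpow, inv_zpow, ← zpow_neg] at this
  have hxay : SemiconjBy (x ^ a) y (z ^ a * y) := by
    rw [SemiconjBy, mul_assoc, hyxa.eq, ← mul_assoc, ← mul_assoc, ← zpow_add, add_neg_cancel,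
      zpow_zero, one_mul]
  have hxayb : x ^ a * y ^ b = z ^ (a * b) * y ^ b * x ^ a := by
    have := hxay.zpow_right b
    rwa [(hyz.zpow_right a).symm.mul_zpow, ← zpow_mul] at this
  calc y ^ b * x ^ a = z ^ (-(a * b)) * (z ^ (a * b) * y ^ b * x ^ a) := by group
    _ = x ^ a * y ^ b * z ^ (-(a * b)) := by
      rw [← hxayb, (((hxz.zpow_zpow a _).mul_left (hyz.zpow_zpow b _))).symm.eq]

theorem normalForm_mul (a b c a' b' c' : ℤ) :
    x ^ a * y ^ b * z ^ c * (x ^ a' * y ^ b' * z ^ c') =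
      x ^ (a + a') * y ^ (b + b') * z ^ (c + c' - a' * b) := by
  have hzx : z ^ c * x ^ a' = x ^ a' * z ^ c := (hxz.zpow_zpow a' c).symm.eq
  have hzy (k : ℤ) : z ^ k * y ^ b' = y ^ b' * z ^ k := (hyz.zpow_zpow b' k).symm.eq
  calc x ^ a * y ^ b * z ^ c * (x ^ a' * y ^ b' * z ^ c')
      = x ^ a * y ^ b * (z ^ c * x ^ a') * y ^ b' * z ^ c' := by group
    _ = x ^ a * (y ^ b * x ^ a') * (z ^ c * y ^ b') * z ^ c' := by rw [hzx]; group
    _ = x ^ (a + a') * y ^ b * (z ^ (-(a' * b)) * y ^ b') * z ^ (c + c') := by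
      rw [zpow_mul_zpow_of_commutator_eq hxz hyz hxy, hzy]; group
    _ = x ^ (a + a') * y ^ (b + b') * z ^ (c + c' - a' * b) := by rw [hzy]; group

theorem normalForm_inv (a b c : ℤ) :
    (x ^ a * y ^ b * z ^ c)⁻¹ = x ^ (-a) * y ^ (-b) * z ^ (-c - a * b) := by
  refine inv_eq_of_mul_eq_one_right ?_
  rw [normalForm_mul hxz hyz hxy, add_neg_cancel, add_neg_cancel,
    show c + (-c - a * b) - -a * b = 0 by ring]
  simp

theorem exists_eq_normalForm_of_mem_closure {g : G} (hg : g ∈ Subgroup.closure {x, y, z}) :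
    ∃ a b c : ℤ, g = x ^ a * y ^ b * z ^ c := by
  induction hg using Subgroup.closure_induction with
  | mem g hg =>
    rcases hg with rfl | rfl | rfl
    exacts [⟨1, 0, 0, by simp⟩, ⟨0, 1, 0, by simp⟩, ⟨0, 0, 1, by simp⟩]
  | one => exact ⟨0, 0, 0, by simp⟩
  | mul g g' _ _ hg hg' =>
    obtain ⟨a, b, c, rfl⟩ := hg
    obtain ⟨a', b', c', rfl⟩ := hg'
    exact ⟨_, _, _, normalForm_mul hxz hyz hxy a b c a' b' c'⟩
  | inv g _ hg =>
    obtain ⟨a, b, c, rfl⟩ := hg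
    exact ⟨_, _, _, normalForm_inv hxz hyz hxy a b c⟩

theorem normalForm_conj (a b c α β γ : ℤ) :
    x ^ a * y ^ b * z ^ c * (x ^ α * y ^ β * z ^ γ) * (x ^ a * y ^ b * z ^ c)⁻¹ =
      x ^ α * y ^ β * z ^ γ * z ^ (a * β - α * b) := by
  rw [mul_inv_eq_iff_eq_mul, mul_assoc _ (z ^ γ), ← zpow_add, normalForm_mul hxz hyz hxy,
    normalForm_mul hxz hyz hxy, add_comm a, add_comm b]
  congr 2
  ring

theorem exists_normalForm_pow (α β γ : ℤ) (k : ℕ) :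
    ∃ c : ℤ, (x ^ α * y ^ β * z ^ γ) ^ k = x ^ (k * α) * y ^ (k * β) * z ^ c := by
  induction k with
  | zero => exact ⟨0, by simp⟩
  | succ k ih =>
    obtain ⟨c, hc⟩ := ih
    refine ⟨c + γ - α * (k * β), ?_⟩
    rw [pow_succ, hc, normalForm_mul hxz hyz hxy]
    push_cast
    congr 3 <;> ring

end ClassTwo

section FiniteOrder
variable {G : Type*} [Group G]

theorem finite_of_forall_exists_eq_zpow_mul_zpow_mul_zpow {x y z : G} (hx : IsOfFinOrder x)
    (hy : IsOfFinOrder y) (hz : IsOfFinOrder z)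
    (h : ∀ g : G, ∃ a b c : ℤ, g = x ^ a * y ^ b * z ^ c) : Finite G := by
  have := hx.finite_zpowers.to_subtype
  have := hy.finite_zpowers.to_subtype
  have := hz.finite_zpowers.to_subtype
  refine Finite.of_surjective
    (fun t : Subgroup.zpowers x × Subgroup.zpowers y × Subgroup.zpowers z =>
      (t.1 : G) * t.2.1 * t.2.2) fun g => ?_
  obtain ⟨a, b, c, rfl⟩ := h g
  exact ⟨(⟨x ^ a, a, rfl⟩, ⟨y ^ b, b, rfl⟩, ⟨z ^ c, c, rfl⟩), rfl⟩

theorem exists_lt_zpow_eq_pow {g : G} {m : ℕ} (hm : 0 < m) (hg : g ^ m = 1) (t : ℤ) :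
    ∃ i < m, g ^ t = g ^ i := by
  have h0 : 0 ≤ t % m := Int.emod_nonneg t (by omega)
  have h1 : t % m < m := Int.emod_lt_of_pos t (by omega)
  refine ⟨(t % m).toNat, by omega, ?_⟩
  rw [zpow_eq_zpow_emod' t hg, ← zpow_natCast, Int.toNat_of_nonneg h0]

theorem zpow_eq_zpow_of_pow_eq_one {g : G} {m : ℕ} (hg : g ^ m = 1) {s t : ℤ}
    (h : (m : ℤ) ∣ s - t) : g ^ s = g ^ t :=
  zpow_eq_zpow_iff_modEq.mpr <| (Int.modEq_iff_dvd.mpr h).symm.of_dvd <|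
    Int.natCast_dvd_natCast.mpr (orderOf_dvd_of_pow_eq_one hg)

end FiniteOrder

theorem exists_mul_sub_mul_dvd_sub {p : ℕ} (hp : p.Prime) {α β : ℤ}
    (h : ¬((p : ℤ) ∣ α ∧ (p : ℤ) ∣ β)) (r : ℕ) (t : ℤ) :
    ∃ a b : ℤ, (p : ℤ) ^ r ∣ a * β - α * b - t := by
  have hp' : Prime (p : ℤ) := Nat.prime_iff_prime_int.mp hp
  rcases not_and_or.mp h with hα | hβ
  · obtain ⟨u, v, huv⟩ := (hp'.coprime_iff_not_dvd.mpr hα).pow_left (m := r)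
    exact ⟨0, -(t * v), ⟨-(t * u), by linear_combination t * huv⟩⟩
  · obtain ⟨u, v, huv⟩ := (hp'.coprime_iff_not_dvd.mpr hβ).pow_left (m := r)
    exact ⟨t * v, 0, ⟨-(t * u), by linear_combination t * huv⟩⟩

namespace heisenbergGroup

variable {p n r : ℕ}

theorem heisX_pow : heisX p n r ^ p ^ n = 1 := by
  have := PresentedGroup.one_of_mem (rels := heisenbergRels p n r) (x := FreeGroup.of 0 ^ p ^ n)
    (by simp [heisenbergRels])
  rwa [map_pow] at this

theorem heisY_pow : heisY p n r ^ p ^ n = 1 := by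
  have := PresentedGroup.one_of_mem (rels := heisenbergRels p n r) (x := FreeGroup.of 1 ^ p ^ n)
    (by simp [heisenbergRels])
  rwa [map_pow] at this

theorem heisZ_pow : heisZ p n r ^ p ^ r = 1 := by
  have := PresentedGroup.one_of_mem (rels := heisenbergRels p n r) (x := FreeGroup.of 2 ^ p ^ r)
    (by simp [heisenbergRels])
  rwa [map_pow] at this

theorem commutator_heisX_heisY : ⁅heisX p n r, heisY p n r⁆ = heisZ p n r := by
  have := PresentedGroup.one_of_mem (rels := heisenbergRels p n r)
    (x := FreeGroup.of 0 * FreeGroup.of 1 * (FreeGroup.of 0)⁻¹ * (FreeGroup.of 1)⁻¹ *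
      (FreeGroup.of 2)⁻¹) (by simp [heisenbergRels])
  simp only [map_mul, map_inv] at this
  exact mul_inv_eq_one.mp this

theorem commute_heisX_heisZ : Commute (heisX p n r) (heisZ p n r) := by
  have := PresentedGroup.one_of_mem (rels := heisenbergRels p n r)
    (x := FreeGroup.of 0 * FreeGroup.of 2 * (FreeGroup.of 0)⁻¹ * (FreeGroup.of 2)⁻¹)
    (by simp [heisenbergRels])
  simp only [map_mul, map_inv] at this
  exact commutatorElement_eq_one_iff_commute.mp this

theorem commute_heisY_heisZ : Commute (heisY p n r) (heisZ p n r) := by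
  have := PresentedGroup.one_of_mem (rels := heisenbergRels p n r)
    (x := FreeGroup.of 1 * FreeGroup.of 2 * (FreeGroup.of 1)⁻¹ * (FreeGroup.of 2)⁻¹)
    (by simp [heisenbergRels])
  simp only [map_mul, map_inv] at this
  exact commutatorElement_eq_one_iff_commute.mp this

theorem exists_eq_normalForm (g : heisenbergGroup p n r) :
    ∃ a b c : ℤ, g = heisX p n r ^ a * heisY p n r ^ b * heisZ p n r ^ c := by
  refine exists_eq_normalForm_of_mem_closure commute_heisX_heisZ commute_heisY_heisZ
    commutator_heisX_heisY ?_
  refine Subgroup.closure_mono ?_ (PresentedGroup.closure_range_of _ ▸ Subgroup.mem_top g)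
  rintro _ ⟨i, rfl⟩
  fin_cases i <;> simp [heisX, heisY, heisZ]

theorem conj_normalForm (a b c α β γ : ℤ) :
    heisX p n r ^ a * heisY p n r ^ b * heisZ p n r ^ c *
        (heisX p n r ^ α * heisY p n r ^ β * heisZ p n r ^ γ) *
        (heisX p n r ^ a * heisY p n r ^ b * heisZ p n r ^ c)⁻¹ =
      heisX p n r ^ α * heisY p n r ^ β * heisZ p n r ^ γ * heisZ p n r ^ (a * β - α * b) :=
  normalForm_conj commute_heisX_heisZ commute_heisY_heisZ commutator_heisX_heisY a b c α β γ

theorem isPGroup : IsPGroup p (heisenbergGroup p n r) := by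
  intro g
  obtain ⟨α, β, γ, rfl⟩ := exists_eq_normalForm g
  obtain ⟨c, hc⟩ := exists_normalForm_pow commute_heisX_heisZ commute_heisY_heisZ
    commutator_heisX_heisY α β γ (p ^ n)
  -- `g ^ p ^ n` is a power of `z`, and `z ^ p ^ r = 1`.
  refine ⟨n + r, ?_⟩
  rw [pow_add, pow_mul, hc, zpow_mul, zpow_mul, zpow_natCast, zpow_natCast, heisX_pow, heisY_pow]
  simp only [one_zpow, one_mul]
  rw [← zpow_natCast, ← zpow_mul, mul_comm, zpow_mul, zpow_natCast, heisZ_pow, one_zpow]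

theorem finite (hp : p ≠ 0) : Finite (heisenbergGroup p n r) :=
  finite_of_forall_exists_eq_zpow_mul_zpow_mul_zpow
    (isOfFinOrder_iff_pow_eq_one.mpr ⟨p ^ n, by positivity, heisX_pow⟩)
    (isOfFinOrder_iff_pow_eq_one.mpr ⟨p ^ n, by positivity, heisY_pow⟩)
    (isOfFinOrder_iff_pow_eq_one.mpr ⟨p ^ r, by positivity, heisZ_pow⟩)
    exists_eq_normalForm

theorem normalForm_mem_frattini (hp : p.Prime) {α β : ℤ} (hα : (p : ℤ) ∣ α) (hβ : (p : ℤ) ∣ β)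
    (γ : ℤ) :
    heisX p n r ^ α * heisY p n r ^ β * heisZ p n r ^ γ ∈ frattini (heisenbergGroup p n r) := by
  have := Fact.mk hp
  have := finite (n := n) (r := r) hp.ne_zero
  have := isPGroup.isNilpotent (p := p) (G := heisenbergGroup p n r)
  obtain ⟨a, rfl⟩ := hα
  obtain ⟨b, rfl⟩ := hβ
  rw [zpow_mul, zpow_mul, zpow_natCast, zpow_natCast]
  refine mul_mem (mul_mem ?_ ?_) ?_
  · exact zpow_mem (isPGroup.pow_mem_frattini _) a
  · exact zpow_mem (isPGroup.pow_mem_frattini _) b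
  · rw [← commutator_heisX_heisY]
    exact zpow_mem (commutator_mem_frattini _ _) γ

end heisenbergGroup

theorem heisenbergGroup_conj_class_of_not_mem_frattini_general
    (p n r : ℕ) (hp : p.Prime)
    (g : heisenbergGroup p n r) (hg : g ∉ frattini (heisenbergGroup p n r)) :
    {h : heisenbergGroup p n r | IsConj g h} =
      {h : heisenbergGroup p n r | ∃ i : ℕ, i ≤ p ^ r - 1 ∧ h = g * heisZ p n r ^ i} := by
  open heisenbergGroup in
  obtain ⟨α, β, γ, rfl⟩ := exists_eq_normalForm g
  have hαβ : ¬((p : ℤ) ∣ α ∧ (p : ℤ) ∣ β) := fun h => hg (normalForm_mem_frattini hp h.1 h.2 γ)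
  ext h
  simp only [Set.mem_ofPred_eq, isConj_iff]
  constructor
  · rintro ⟨w, rfl⟩
    obtain ⟨a, b, c, rfl⟩ := exists_eq_normalForm w
    obtain ⟨i, hi, hzi⟩ := exists_lt_zpow_eq_pow (pow_pos hp.pos r) heisZ_pow (a * β - α * b)
    exact ⟨i, by omega, by rw [conj_normalForm, hzi]⟩
  · rintro ⟨i, -, rfl⟩
    obtain ⟨a, b, hab⟩ := exists_mul_sub_mul_dvd_sub hp hαβ r i
    refine ⟨heisX p n r ^ a * heisY p n r ^ b * heisZ p n r ^ (0 : ℤ), ?_⟩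
    rw [conj_normalForm,
      zpow_eq_zpow_of_pow_eq_one heisZ_pow (s := a * β - α * b) (t := i) (by exact_mod_cast hab),
      zpow_natCast]

/-- for a prime `p ≥ 5`, integers `n ≥ r ≥ 1` and
`G = ⟨x, y, z ∣ x^{p^n} = y^{p^n} = z^{p^r} = 1, [x,y] = z, [x,z] = [y,z] = 1⟩`,
if `g ∈ G` does not lie in the Frattini subgroup `Φ(G)` then the conjugacy class of `g`
is exactly `{g * z^i : 0 ≤ i ≤ p^r − 1}`. -/
theorem heisenbergGroup_conj_class_of_not_mem_frattini
    (p n r : ℕ) (hp : p.Prime) (hp5 : 5 ≤ p) (hr : 1 ≤ r) (hrn : r ≤ n)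
    (g : heisenbergGroup p n r) (hg : g ∉ frattini (heisenbergGroup p n r)) :
    {h : heisenbergGroup p n r | IsConj g h} =
      {h : heisenbergGroup p n r | ∃ i : ℕ, i ≤ p ^ r - 1 ∧ h = g * heisZ p n r ^ i} :=
  heisenbergGroup_conj_class_of_not_mem_frattini_general p n r hp g hg
end

section
/- Let G and H be finite groups of coprime order such that G and H are Beauville groups and G is a purely non-strongly real Beauville group. Then the direct product G × H is a purely non-strongly real Beauville group: it admits a Beauville structure, and none of its Beauville structures is strongly real. -/
/-!
Coprimality gives an exponent `N` with `g ^ N = g` on `G` and `h ^ N = 1` on `H`, so `z ↦ z ^ N`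
projects `G × H` onto `G × 1` and maps each `Σ(x, y)` into itself. Hence every subgroup of
`G × H` is the product of its projections, and products of Beauville structures of `G` and `H`
are Beauville structures of `G × H`. Conversely, if `c` lies in both projected `Σ`-sets of a
Beauville structure of `G × H`, then `(c, 1)` lies in both `Σ`-sets, so `c = 1`: the first
components form a Beauville structure of `G`. Homomorphisms between groups of coprime order are
trivial, so every automorphism of `G × H` induces one of `G`, and a strongly real structure of
`G × H` would project to a strongly real one of `G`.
-/

section Sigma

variable {G K : Type*} [Group G] [Group K]

lemma mem_beauvilleSigma {x y a : G} :
    a ∈ beauvilleSigma x y ↔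
      ∃ z ∈ ({x, y, x * y} : Set G), ∃ (i : ℕ) (g : G), a = g * z ^ i * g⁻¹ := by
  simp only [beauvilleSigma, Set.mem_ofPred_eq, Set.mem_insert_iff, Set.mem_singleton_iff,
    exists_eq_or_imp, exists_eq_left]
  grind

lemma one_mem_beauvilleSigma (x y : G) : 1 ∈ beauvilleSigma x y :=
  mem_beauvilleSigma.2 ⟨x, by simp, 0, 1, by simp⟩

lemma pow_mem_beauvilleSigma {x y a : G} (h : a ∈ beauvilleSigma x y) (n : ℕ) :
    a ^ n ∈ beauvilleSigma x y := by
  obtain ⟨z, hz, i, g, rfl⟩ := mem_beauvilleSigma.1 h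
  exact mem_beauvilleSigma.2 ⟨z, hz, i * n, g, by rw [conj_pow, pow_mul]⟩

lemma beauvilleSigma_inter_eq_one_iff {x₁ y₁ x₂ y₂ : G} :
    beauvilleSigma x₁ y₁ ∩ beauvilleSigma x₂ y₂ = {1} ↔
      ∀ a ∈ beauvilleSigma x₁ y₁, a ∈ beauvilleSigma x₂ y₂ → a = 1 := by
  refine ⟨fun h a h₁ h₂ => (h ▸ ⟨h₁, h₂⟩ : a ∈ ({1} : Set G)), fun h => ?_⟩
  exact Set.eq_singleton_iff_unique_mem.2
    ⟨⟨one_mem_beauvilleSigma _ _, one_mem_beauvilleSigma _ _⟩, fun a ⟨h₁, h₂⟩ => h a h₁ h₂⟩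

lemma MonoidHom.map_mem_beauvilleSigma (f : G →* K) {x y a : G} (h : a ∈ beauvilleSigma x y) :
    f a ∈ beauvilleSigma (f x) (f y) := by
  obtain ⟨z, hz, i, g, rfl⟩ := mem_beauvilleSigma.1 h
  refine mem_beauvilleSigma.2 ⟨f z, ?_, i, f g, by simp⟩
  rcases hz with rfl | rfl | rfl <;> simp

lemma MonoidHom.exists_mem_beauvilleSigma_apply_eq (f : G →* K) (hf : Function.Surjective f)
    {x y : G} {c : K} (hc : c ∈ beauvilleSigma (f x) (f y)) :
    ∃ a ∈ beauvilleSigma x y, f a = c := by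
  obtain ⟨w, hw, i, k, rfl⟩ := mem_beauvilleSigma.1 hc
  obtain ⟨g, rfl⟩ := hf k
  obtain ⟨z, hz, rfl⟩ : ∃ z ∈ ({x, y, x * y} : Set G), f z = w := by
    rcases hw with rfl | rfl | rfl
    exacts [⟨x, by simp⟩, ⟨y, by simp⟩, ⟨x * y, by simp⟩]
  exact ⟨g * z ^ i * g⁻¹, mem_beauvilleSigma.2 ⟨z, hz, i, g, rfl⟩, by simp⟩

lemma MonoidHom.closure_pair_map_eq_top (f : G →* K) (hf : Function.Surjective f) {a b : G}
    (hab : Subgroup.closure {a, b} = ⊤) : Subgroup.closure {f a, f b} = ⊤ := by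
  rw [← Set.image_pair, ← f.map_closure, hab, Subgroup.map_top_of_surjective f hf]

end Sigma

section Coprime

variable {G H : Type*} [Group G] [Group H]

lemma MonoidHom.apply_eq_one_of_coprime (hco : (Nat.card G).Coprime (Nat.card H))
    (f : G →* H) (g : G) : f g = 1 :=
  orderOf_eq_one_iff.1 <| Nat.eq_one_of_dvd_coprimes hco
    ((orderOf_map_dvd f g).trans (orderOf_dvd_natCard g)) (orderOf_dvd_natCard (f g))

lemma exists_pow_eq_inl_fst (hco : (Nat.card G).Coprime (Nat.card H)) :
    ∃ N : ℕ, ∀ z : G × H, z ^ N = (z.1, 1) := by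
  obtain ⟨N, hG, hH⟩ := Nat.chineseRemainder hco 1 0
  refine ⟨N, fun z => Prod.ext ?_ ?_⟩
  · simpa using pow_eq_pow_iff_modEq.2 (hG.of_dvd (orderOf_dvd_natCard z.1))
  · simpa using pow_eq_pow_iff_modEq.2 (hH.of_dvd (orderOf_dvd_natCard z.2))

lemma exists_pow_eq_inr_snd (hco : (Nat.card G).Coprime (Nat.card H)) :
    ∃ N : ℕ, ∀ z : G × H, z ^ N = (1, z.2) := by
  obtain ⟨N, hN⟩ := exists_pow_eq_inl_fst (G := H) (H := G) hco.symm
  exact ⟨N, fun z => by simpa using congrArg Prod.swap (hN z.swap)⟩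

lemma Subgroup.eq_prod_map_fst_map_snd (hco : (Nat.card G).Coprime (Nat.card H))
    (K : Subgroup (G × H)) :
    K = (K.map (MonoidHom.fst G H)).prod (K.map (MonoidHom.snd G H)) := by
  refine le_antisymm (le_prod_iff.2 ⟨le_rfl, le_rfl⟩) fun z hz => ?_
  obtain ⟨⟨a, ha, ha₁ : a.1 = z.1⟩, ⟨b, hb, hb₂ : b.2 = z.2⟩⟩ := mem_prod.1 hz
  obtain ⟨N, hN⟩ := exists_pow_eq_inl_fst hco
  obtain ⟨M, hM⟩ := exists_pow_eq_inr_snd hco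
  have : z = a ^ N * b ^ M := by rw [hN, hM]; ext <;> simp [ha₁, hb₂]
  exact this ▸ K.mul_mem (K.pow_mem ha N) (K.pow_mem hb M)

lemma closure_pair_prod_eq_top (hco : (Nat.card G).Coprime (Nat.card H)) {x y : G} {u v : H}
    (hxy : Subgroup.closure {x, y} = ⊤) (huv : Subgroup.closure {u, v} = ⊤) :
    Subgroup.closure {((x, u) : G × H), (y, v)} = ⊤ := by
  rw [Subgroup.eq_prod_map_fst_map_snd hco (Subgroup.closure _), MonoidHom.map_closure,
    MonoidHom.map_closure, Set.image_pair, Set.image_pair]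
  simp [hxy, huv]

lemma inl_mem_beauvilleSigma (hco : (Nat.card G).Coprime (Nat.card H)) {x y : G × H} {c : G}
    (hc : c ∈ beauvilleSigma x.1 y.1) : ((c, 1) : G × H) ∈ beauvilleSigma x y := by
  obtain ⟨a, ha, rfl⟩ :=
    (MonoidHom.fst G H).exists_mem_beauvilleSigma_apply_eq Prod.fst_surjective hc
  obtain ⟨N, hN⟩ := exists_pow_eq_inl_fst hco
  simpa [hN] using pow_mem_beauvilleSigma ha N

lemma MulEquiv.fst_apply_of_coprime (hco : (Nat.card G).Coprime (Nat.card H))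
    (φ : (G × H) ≃* (G × H)) (z : G × H) : (φ z).1 = (φ (z.1, 1)).1 := by
  have hinr : (φ (1, z.2)).1 = 1 :=
    ((MonoidHom.fst G H).comp (φ.toMonoidHom.comp (MonoidHom.inr G H))).apply_eq_one_of_coprime
      hco.symm z.2
  simpa [hinr] using congrArg Prod.fst (map_mul φ (z.1, 1) (1, z.2))

def MulEquiv.fstOfCoprime (hco : (Nat.card G).Coprime (Nat.card H))
    (φ : (G × H) ≃* (G × H)) : G ≃* G where
  toFun g := (φ (g, 1)).1
  invFun g := (φ.symm (g, 1)).1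
  left_inv g := by simp [← MulEquiv.fst_apply_of_coprime hco φ.symm]
  right_inv g := by simp [← MulEquiv.fst_apply_of_coprime hco φ]
  map_mul' a b := by simpa using congrArg Prod.fst (map_mul φ (a, 1) (b, 1))

lemma MulEquiv.fst_apply_eq_fstOfCoprime (hco : (Nat.card G).Coprime (Nat.card H))
    (φ : (G × H) ≃* (G × H)) (z : G × H) : (φ z).1 = φ.fstOfCoprime hco z.1 :=
  MulEquiv.fst_apply_of_coprime hco φ z

end Coprime

section Structures

variable {G H : Type*} [Group G] [Group H]

lemma IsBeauvilleStructure.prod (hco : (Nat.card G).Coprime (Nat.card H)) {x₁ y₁ x₂ y₂ : G}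
    {u₁ v₁ u₂ v₂ : H} (hG : IsBeauvilleStructure x₁ y₁ x₂ y₂)
    (hH : IsBeauvilleStructure u₁ v₁ u₂ v₂) :
    IsBeauvilleStructure ((x₁, u₁) : G × H) (y₁, v₁) (x₂, u₂) (y₂, v₂) := by
  obtain ⟨hG₁, hG₂, hGs⟩ := hG
  obtain ⟨hH₁, hH₂, hHs⟩ := hH
  refine ⟨closure_pair_prod_eq_top hco hG₁ hH₁, closure_pair_prod_eq_top hco hG₂ hH₂,
    beauvilleSigma_inter_eq_one_iff.2 fun a h₁ h₂ => Prod.ext ?_ ?_⟩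
  · exact beauvilleSigma_inter_eq_one_iff.1 hGs a.1
      ((MonoidHom.fst G H).map_mem_beauvilleSigma h₁)
      ((MonoidHom.fst G H).map_mem_beauvilleSigma h₂)
  · exact beauvilleSigma_inter_eq_one_iff.1 hHs a.2
      ((MonoidHom.snd G H).map_mem_beauvilleSigma h₁)
      ((MonoidHom.snd G H).map_mem_beauvilleSigma h₂)

lemma IsBeauvilleStructure.fst (hco : (Nat.card G).Coprime (Nat.card H))
    {a₁ b₁ a₂ b₂ : G × H} (h : IsBeauvilleStructure a₁ b₁ a₂ b₂) :
    IsBeauvilleStructure a₁.1 b₁.1 a₂.1 b₂.1 := by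
  obtain ⟨h₁, h₂, hs⟩ := h
  refine ⟨(MonoidHom.fst G H).closure_pair_map_eq_top Prod.fst_surjective h₁,
    (MonoidHom.fst G H).closure_pair_map_eq_top Prod.fst_surjective h₂,
    beauvilleSigma_inter_eq_one_iff.2 fun c hc₁ hc₂ => ?_⟩
  exact congrArg Prod.fst (beauvilleSigma_inter_eq_one_iff.1 hs _
    (inl_mem_beauvilleSigma hco hc₁) (inl_mem_beauvilleSigma hco hc₂))

lemma IsStronglyRealStructure.fst (hco : (Nat.card G).Coprime (Nat.card H))
    {a₁ b₁ a₂ b₂ : G × H} (h : IsStronglyRealStructure a₁ b₁ a₂ b₂) :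
    IsStronglyRealStructure a₁.1 b₁.1 a₂.1 b₂.1 := by
  obtain ⟨φ, g₁, g₂, e₁, e₂, e₃, e₄⟩ := h
  have fst_eq {a g : G × H} (e : g * φ a * g⁻¹ = a⁻¹) :
      g.1 * φ.fstOfCoprime hco a.1 * g.1⁻¹ = a.1⁻¹ := by
    simpa only [Prod.fst_mul, Prod.fst_inv, MulEquiv.fst_apply_eq_fstOfCoprime hco φ] using
      congrArg Prod.fst e
  exact ⟨φ.fstOfCoprime hco, g₁.1, g₂.1, fst_eq e₁, fst_eq e₂, fst_eq e₃, fst_eq e₄⟩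

end Structures

theorem prod_purely_non_strongly_real_general
    (G H : Type*) [Group G] [Group H]
    (hco : Nat.Coprime (Nat.card G) (Nat.card H))
    (hG : ∃ x₁ y₁ x₂ y₂ : G, IsBeauvilleStructure x₁ y₁ x₂ y₂)
    (hH : ∃ u₁ v₁ u₂ v₂ : H, IsBeauvilleStructure u₁ v₁ u₂ v₂)
    (hGpure : ∀ x₁ y₁ x₂ y₂ : G,
      IsBeauvilleStructure x₁ y₁ x₂ y₂ → ¬ IsStronglyRealStructure x₁ y₁ x₂ y₂) :
    (∃ a₁ b₁ a₂ b₂ : G × H, IsBeauvilleStructure a₁ b₁ a₂ b₂) ∧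
    ∀ a₁ b₁ a₂ b₂ : G × H,
      IsBeauvilleStructure a₁ b₁ a₂ b₂ → ¬ IsStronglyRealStructure a₁ b₁ a₂ b₂ := by
  obtain ⟨x₁, y₁, x₂, y₂, hGB⟩ := hG
  obtain ⟨u₁, v₁, u₂, v₂, hHB⟩ := hH
  exact ⟨⟨_, _, _, _, hGB.prod hco hHB⟩,
    fun _ _ _ _ hB hR => hGpure _ _ _ _ (hB.fst hco) (hR.fst hco)⟩

/-- if `G` and `H` are finite Beauville groups of coprime order and `G` is
purely non-strongly real (no Beauville structure of `G` is strongly real), then `G × H`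
is a purely non-strongly real Beauville group: it admits a Beauville structure and none
of its Beauville structures is strongly real. -/
theorem prod_purely_non_strongly_real
    (G H : Type*) [Group G] [Group H] [Finite G] [Finite H]
    (hco : Nat.Coprime (Nat.card G) (Nat.card H))
    (hG : ∃ x₁ y₁ x₂ y₂ : G, IsBeauvilleStructure x₁ y₁ x₂ y₂)
    (hH : ∃ u₁ v₁ u₂ v₂ : H, IsBeauvilleStructure u₁ v₁ u₂ v₂)
    (hGpure : ∀ x₁ y₁ x₂ y₂ : G,
      IsBeauvilleStructure x₁ y₁ x₂ y₂ → ¬ IsStronglyRealStructure x₁ y₁ x₂ y₂) :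
    (∃ a₁ b₁ a₂ b₂ : G × H, IsBeauvilleStructure a₁ b₁ a₂ b₂) ∧
    ∀ a₁ b₁ a₂ b₂ : G × H,
      IsBeauvilleStructure a₁ b₁ a₂ b₂ → ¬ IsStronglyRealStructure a₁ b₁ a₂ b₂ :=
  prod_purely_non_strongly_real_general G H hco hG hH hGpure
end

section
/- Let G and H be finite groups of coprime order, let {(x₁,y₁),(x₂,y₂)} be a Beauville structure for G and let {(u₁,v₁),(u₂,v₂)} be a Beauville structure for H. Then {((x₁,u₁),(y₁,v₁)), ((x₂,u₂),(y₂,v₂))} is a Beauville structure for the direct product G × H. -/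
/-- if `G` and `H` are finite groups of coprime order,
`{(x₁,y₁),(x₂,y₂)}` is a Beauville structure for `G` and `{(u₁,v₁),(u₂,v₂)}` is a
Beauville structure for `H`, then `{((x₁,u₁),(y₁,v₁)),((x₂,u₂),(y₂,v₂))}` is a
Beauville structure for `G × H`. -/
theorem prod_beauville_structure
    (G H : Type*) [Group G] [Group H] [Finite G] [Finite H]
    (hco : Nat.Coprime (Nat.card G) (Nat.card H))
    (x₁ y₁ x₂ y₂ : G) (u₁ v₁ u₂ v₂ : H)
    (hG : IsBeauvilleStructure x₁ y₁ x₂ y₂)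
    (hH : IsBeauvilleStructure u₁ v₁ u₂ v₂) :
    IsBeauvilleStructure ((x₁, u₁) : G × H) (y₁, v₁) (x₂, u₂) (y₂, v₂) := by
  obtain ⟨hG1, hG2, hG3⟩ := hG
  obtain ⟨hH1, hH2, hH3⟩ := hH
  -- generation lemma
  have key : ∀ (x y : G) (u v : H), Subgroup.closure {x, y} = ⊤ →
      Subgroup.closure {u, v} = ⊤ →
      Subgroup.closure {((x, u) : G × H), (y, v)} = ⊤ := by
    intro x y u v hx hu
    set S := Subgroup.closure {((x, u) : G × H), (y, v)} with hS
    have hfst : Subgroup.map (MonoidHom.fst G H) S = ⊤ := by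
      rw [hS, MonoidHom.map_closure, Set.image_insert_eq, Set.image_singleton]
      exact hx
    have hsnd : Subgroup.map (MonoidHom.snd G H) S = ⊤ := by
      rw [hS, MonoidHom.map_closure, Set.image_insert_eq, Set.image_singleton]
      exact hu
    have hleft : ∀ g : G, ((g, 1) : G × H) ∈ S := by
      intro g
      obtain ⟨g', hg'⟩ := (powCoprime hco).surjective g
      have : g' ∈ Subgroup.map (MonoidHom.fst G H) S := by rw [hfst]; trivial
      obtain ⟨⟨a, b⟩, haS, hab⟩ := this
      have hp := pow_mem haS (Nat.card H)
      have : ((a, b) : G × H) ^ Nat.card H = (g, 1) := by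
        rw [Prod.pow_mk, pow_card_eq_one']
        simp only [MonoidHom.coe_fst] at hab
        rw [hab, ← powCoprime_apply hco, hg']
      rwa [this] at hp
    have hright : ∀ h : H, ((1, h) : G × H) ∈ S := by
      intro h
      obtain ⟨h', hh'⟩ := (powCoprime hco.symm).surjective h
      have : h' ∈ Subgroup.map (MonoidHom.snd G H) S := by rw [hsnd]; trivial
      obtain ⟨⟨a, b⟩, haS, hab⟩ := this
      have hp := pow_mem haS (Nat.card G)
      have : ((a, b) : G × H) ^ Nat.card G = (1, h) := by
        rw [Prod.pow_mk, pow_card_eq_one']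
        simp only [MonoidHom.coe_snd] at hab
        rw [hab, ← powCoprime_apply hco.symm, hh']
      rwa [this] at hp
    rw [eq_top_iff]
    rintro ⟨g, h⟩ -
    have : ((g, h) : G × H) = (g, 1) * (1, h) := by simp
    rw [this]
    exact mul_mem (hleft g) (hright h)
  -- component lemma for sigma
  have comp : ∀ (x y : G) (u v : H) (a : G) (b : H),
      ((a, b) : G × H) ∈ beauvilleSigma (x, u) (y, v) →
      a ∈ beauvilleSigma x y ∧ b ∈ beauvilleSigma u v := by
    rintro x y u v a b ⟨i, ⟨g, h⟩, (hc | hc | hc)⟩ <;>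
      simp only [Prod.pow_mk, Prod.mk_mul_mk, Prod.inv_mk, Prod.mk.injEq] at hc <;>
      obtain ⟨h1, h2⟩ := hc
    · exact ⟨⟨i, g, Or.inl h1⟩, ⟨i, h, Or.inl h2⟩⟩
    · exact ⟨⟨i, g, Or.inr (Or.inl h1)⟩, ⟨i, h, Or.inr (Or.inl h2)⟩⟩
    · exact ⟨⟨i, g, Or.inr (Or.inr h1)⟩, ⟨i, h, Or.inr (Or.inr h2)⟩⟩
  refine ⟨key x₁ y₁ u₁ v₁ hG1 hH1, key x₂ y₂ u₂ v₂ hG2 hH2, ?_⟩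
  ext ⟨a, b⟩
  simp only [Set.mem_inter_iff, Set.mem_singleton_iff]
  constructor
  · rintro ⟨m1, m2⟩
    obtain ⟨ha1, hb1⟩ := comp _ _ _ _ _ _ m1
    obtain ⟨ha2, hb2⟩ := comp _ _ _ _ _ _ m2
    have ha : a = 1 := by
      have : a ∈ beauvilleSigma x₁ y₁ ∩ beauvilleSigma x₂ y₂ := ⟨ha1, ha2⟩
      rwa [hG3, Set.mem_singleton_iff] at this
    have hb : b = 1 := by
      have : b ∈ beauvilleSigma u₁ v₁ ∩ beauvilleSigma u₂ v₂ := ⟨hb1, hb2⟩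
      rwa [hH3, Set.mem_singleton_iff] at this
    rw [ha, hb]; rfl
  · intro h
    rw [h]
    exact ⟨⟨0, 1, Or.inl (by simp)⟩, ⟨0, 1, Or.inl (by simp)⟩⟩
end

section
/- In the symmetric group on {1,…,16}, let x₁ = (1,2,3,4,5,6,7,8,9,10,11)(12,13,14,15,16), y₁ = (1,5,3,4,10,2,8,9,11,6,7)(12,14,15,13,16), x₂ = (1,2,9,10,6)(3,11,5,4,7)(12,13,14,15,16) and y₂ = (1,4,8,11,3)(2,9,7,5,6)(12,14,15,13,16), and let K = ⟨x₁,y₁⟩ be the subgroup they generate. Then ⟨x₂,y₂⟩ = K, the elements x₁, y₁ and x₁y₁ each have order 55, the elements x₂, y₂ and x₂y₂ each have order 5, and {(x₁,y₁),(x₂,y₂)} is a Beauville structure for K (of type ((55,55,55),(5,5,5))). -/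
/-- `beauvilleSigmaIn K x y` is Σ(x,y) computed inside the subgroup `K`: the set of all
`K`-conjugates of all powers of `x`, `y` and `x*y`. -/
def beauvilleSigmaIn {G : Type*} [Group G] (K : Subgroup G) (x y : G) : Set G :=
  {a | ∃ (i : ℕ), ∃ g ∈ K,
      a = g * x ^ i * g⁻¹ ∨ a = g * y ^ i * g⁻¹ ∨ a = g * (x * y) ^ i * g⁻¹}

/-- `{(x₁,y₁),(x₂,y₂)}` is a Beauville structure for the subgroup `K`:
both pairs generate `K` and `Σ(x₁,y₁) ∩ Σ(x₂,y₂) = {1}` (computed within `K`). -/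
def IsBeauvilleStructureFor {G : Type*} [Group G] (K : Subgroup G) (x₁ y₁ x₂ y₂ : G) : Prop :=
  Subgroup.closure {x₁, y₁} = K ∧ Subgroup.closure {x₂, y₂} = K ∧
    beauvilleSigmaIn K x₁ y₁ ∩ beauvilleSigmaIn K x₂ y₂ = {1}

set_option maxRecDepth 40000

section Helpers

variable {G : Type*} [Group G]

private lemma conjpow (g x : G) (n : ℕ) : (g * x * g⁻¹) ^ n = g * x ^ n * g⁻¹ := by
  induction n with
  | zero => simp
  | succ n ih => rw [pow_succ, pow_succ, ih]; group

private lemma powmod {x : G} {n : ℕ} (h : x ^ n = 1) (k : ℕ) : x ^ k = x ^ (k % n) := by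
  conv_lhs => rw [← Nat.div_add_mod k n]
  rw [pow_add, pow_mul, h, one_pow, one_mul]

private lemma order55 {x : G} (h55 : x ^ 55 = 1) (h5 : x ^ 5 ≠ 1) (h11 : x ^ 11 ≠ 1) :
    orderOf x = 55 := by
  have hd : orderOf x ∣ 55 := orderOf_dvd_of_pow_eq_one h55
  have hmem : orderOf x ∈ Nat.divisors 55 := Nat.mem_divisors.mpr ⟨hd, by norm_num⟩
  have hdiv : Nat.divisors 55 = {1, 5, 11, 55} := by decide
  rw [hdiv] at hmem
  simp only [Finset.mem_insert, Finset.mem_singleton] at hmem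
  rcases hmem with h | h | h | h
  · have hx : x = 1 := orderOf_eq_one_iff.mp h
    rw [hx] at h5; simp at h5
  · exact absurd (h ▸ pow_orderOf_eq_one x) h5
  · exact absurd (h ▸ pow_orderOf_eq_one x) h11
  · exact h

private lemma order5 {x : G} (h5 : x ^ 5 = 1) (h1 : x ≠ 1) : orderOf x = 5 := by
  have : Fact (Nat.Prime 5) := ⟨by norm_num⟩
  exact orderOf_eq_prime h5 h1

/-- The key separation lemma: an element that is simultaneously a conjugate of a power of an
order-55 element `p` (whose 11th power `c` has all powers of support ≤ 5) and a conjugate of a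
power of an element `q` of order dividing 5 whose nontrivial powers have support 15, is trivial. -/
private lemma key {p q c a g h : Equiv.Perm (Fin 16)} {i j : ℕ}
    (h1 : a = g * p ^ i * g⁻¹) (h2 : a = h * q ^ j * h⁻¹)
    (hp : orderOf p = 55) (hc : p ^ 11 = c)
    (hc5 : ∀ n : Fin 5, ((c ^ (n : ℕ)).support.card ≤ 5))
    (hq5 : q ^ 5 = 1) (hq : ∀ n : Fin 5, (n : ℕ) ≠ 0 → ((q ^ (n : ℕ)).support.card = 15)) :
    a = 1 := by
  have hqj : q ^ j = q ^ (j % 5) := powmod hq5 j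
  by_cases hj : j % 5 = 0
  · rw [h2, hqj, hj, pow_zero, mul_one]; group
  · exfalso
    have ha5 : a ^ 5 = 1 := by
      rw [h2, conjpow, ← pow_mul, mul_comm j 5, pow_mul, hq5, one_pow, mul_one]; group
    have hpi5 : p ^ (i * 5) = 1 := by
      have h' : g * p ^ (i * 5) * g⁻¹ = 1 := by
        rw [pow_mul, ← conjpow, ← h1]; exact ha5
      have h'' := congrArg (fun z => g⁻¹ * z * g) h'
      simpa [mul_assoc] using h''
    have hdvd : (55 : ℕ) ∣ i * 5 := hp ▸ orderOf_dvd_of_pow_eq_one hpi5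
    obtain ⟨t, ht⟩ := hdvd
    have hit : i = 11 * t := by omega
    have hc55 : c ^ 5 = 1 := by
      rw [← hc, ← pow_mul]
      exact show p ^ 55 = 1 from hp ▸ pow_orderOf_eq_one p
    have hcp : p ^ i = c ^ (t % 5) := by rw [hit, pow_mul, hc, ← powmod hc55 t]
    have e1 : a.support.card = (c ^ (t % 5)).support.card := by
      rw [h1, hcp, Equiv.Perm.support_conj, Finset.card_map]
    have e2 : a.support.card = 15 := by
      rw [h2, hqj, Equiv.Perm.support_conj, Finset.card_map]
      exact hq ⟨j % 5, Nat.mod_lt _ (by norm_num)⟩ hj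
    have e3 : (c ^ (t % 5)).support.card ≤ 5 := hc5 ⟨t % 5, Nat.mod_lt _ (by norm_num)⟩
    omega

end Helpers

section Data

private def px₁ : Equiv.Perm (Fin 16) :=
  List.formPerm [(0 : Fin 16), 1, 2, 3, 4, 5, 6, 7, 8, 9, 10] *
    List.formPerm [(11 : Fin 16), 12, 13, 14, 15]
private def py₁ : Equiv.Perm (Fin 16) :=
  List.formPerm [(0 : Fin 16), 4, 2, 3, 9, 1, 7, 8, 10, 5, 6] *
    List.formPerm [(11 : Fin 16), 13, 14, 12, 15]
private def px₂ : Equiv.Perm (Fin 16) :=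
  List.formPerm [(0 : Fin 16), 1, 8, 9, 5] * List.formPerm [(2 : Fin 16), 10, 4, 3, 6] *
    List.formPerm [(11 : Fin 16), 12, 13, 14, 15]
private def py₂ : Equiv.Perm (Fin 16) :=
  List.formPerm [(0 : Fin 16), 3, 7, 10, 2] * List.formPerm [(1 : Fin 16), 8, 6, 4, 5] *
    List.formPerm [(11 : Fin 16), 13, 14, 12, 15]
private def pz₁ : Equiv.Perm (Fin 16) :=
  List.formPerm [(0 : Fin 16), 5, 7, 9, 2, 4, 3, 10, 6, 1, 8] *
    List.formPerm [(11 : Fin 16), 14, 13, 15, 12]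
private def pz₂ : Equiv.Perm (Fin 16) :=
  List.formPerm [(0 : Fin 16), 6, 3, 7, 4] * List.formPerm [(1 : Fin 16), 9, 5, 8, 2] *
    List.formPerm [(11 : Fin 16), 14, 13, 15, 12]
private def c₁ : Equiv.Perm (Fin 16) := List.formPerm [(11 : Fin 16), 12, 13, 14, 15]
private def c₂ : Equiv.Perm (Fin 16) := List.formPerm [(11 : Fin 16), 13, 14, 12, 15]
private def c₃ : Equiv.Perm (Fin 16) := List.formPerm [(11 : Fin 16), 14, 13, 15, 12]

private lemma m1 : px₁ * py₁ = pz₁ := by decide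
private lemma m2 : px₂ * py₂ = pz₂ := by decide
private lemma l1 : px₁ ^ 11 = c₁ := by decide
private lemma l2 : py₁ ^ 11 = c₂ := by decide
private lemma l3 : (px₁ * py₁) ^ 11 = c₃ := by rw [m1]; decide
private lemma l4 : c₁ ^ 5 = 1 := by decide
private lemma l5 : c₂ ^ 5 = 1 := by decide
private lemma l6 : c₃ ^ 5 = 1 := by decide

private lemma ordx₁ : orderOf px₁ = 55 :=
  order55 (by rw [show (55 : ℕ) = 11 * 5 by norm_num, pow_mul, l1, l4])
    (by decide) (by rw [l1]; decide)
private lemma ordy₁ : orderOf py₁ = 55 :=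
  order55 (by rw [show (55 : ℕ) = 11 * 5 by norm_num, pow_mul, l2, l5])
    (by decide) (by rw [l2]; decide)
private lemma ordxy₁ : orderOf (px₁ * py₁) = 55 :=
  order55 (by rw [show (55 : ℕ) = 11 * 5 by norm_num, pow_mul, l3, l6])
    (by rw [m1]; decide) (by rw [l3]; decide)

private lemma q1 : px₂ ^ 5 = 1 := by decide
private lemma q2 : py₂ ^ 5 = 1 := by decide
private lemma q3 : (px₂ * py₂) ^ 5 = 1 := by rw [m2]; decide
private lemma ordx₂ : orderOf px₂ = 5 := order5 q1 (by decide)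
private lemma ordy₂ : orderOf py₂ = 5 := order5 q2 (by decide)
private lemma ordxy₂ : orderOf (px₂ * py₂) = 5 := order5 q3 (by rw [m2]; decide)

private lemma s1 : ∀ n : Fin 5, ((c₁ ^ (n : ℕ)).support.card ≤ 5) := by decide
private lemma s2 : ∀ n : Fin 5, ((c₂ ^ (n : ℕ)).support.card ≤ 5) := by decide
private lemma s3 : ∀ n : Fin 5, ((c₃ ^ (n : ℕ)).support.card ≤ 5) := by decide
private lemma t1 : ∀ n : Fin 5, (n : ℕ) ≠ 0 → ((px₂ ^ (n : ℕ)).support.card = 15) := by decide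
private lemma t2 : ∀ n : Fin 5, (n : ℕ) ≠ 0 → ((py₂ ^ (n : ℕ)).support.card = 15) := by decide
private lemma t3 : ∀ n : Fin 5, (n : ℕ) ≠ 0 → (((px₂ * py₂) ^ (n : ℕ)).support.card = 15) := by
  rw [m2]; decide

private lemma wordx₂ : px₂ = px₁ * py₁ * px₁ * py₁ * px₁⁻¹ * py₁ * py₁ * px₁⁻¹ * py₁ * px₁⁻¹ * py₁⁻¹ := by decide
private lemma wordy₂ : py₂ = px₁ * py₁ * px₁ * py₁⁻¹ * px₁⁻¹ * py₁ * px₁⁻¹ * px₁⁻¹ * py₁ * px₁⁻¹ * px₁⁻¹ * px₁⁻¹ := by decide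
private lemma wordx₁ : px₁ = px₂⁻¹ * px₂⁻¹ * py₂⁻¹ * px₂ * px₂ * py₂⁻¹ * py₂⁻¹ * px₂ * py₂⁻¹ * py₂⁻¹ * px₂ * py₂⁻¹ := by decide
private lemma wordy₁ : py₁ = py₂ * px₂ * px₂ * py₂⁻¹ * px₂ * py₂⁻¹ * py₂⁻¹ * px₂⁻¹ * px₂⁻¹ * py₂ * px₂ * px₂ * py₂ := by decide

private lemma closure_eq :
    Subgroup.closure {px₂, py₂} = Subgroup.closure ({px₁, py₁} : Set (Equiv.Perm (Fin 16))) := by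
  have ha : px₁ ∈ Subgroup.closure ({px₁, py₁} : Set (Equiv.Perm (Fin 16))) :=
    Subgroup.subset_closure (Set.mem_insert _ _)
  have hb : py₁ ∈ Subgroup.closure ({px₁, py₁} : Set (Equiv.Perm (Fin 16))) :=
    Subgroup.subset_closure (Set.mem_insert_of_mem _ rfl)
  have hc : px₂ ∈ Subgroup.closure ({px₂, py₂} : Set (Equiv.Perm (Fin 16))) :=
    Subgroup.subset_closure (Set.mem_insert _ _)
  have hd : py₂ ∈ Subgroup.closure ({px₂, py₂} : Set (Equiv.Perm (Fin 16))) :=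
    Subgroup.subset_closure (Set.mem_insert_of_mem _ rfl)
  apply le_antisymm
  · rw [Subgroup.closure_le]
    rintro z hz
    simp only [Set.mem_insert_iff, Set.mem_singleton_iff] at hz
    rcases hz with rfl | rfl
    · rw [wordx₂]
      exact (mul_mem (mul_mem (mul_mem (mul_mem (mul_mem (mul_mem (mul_mem (mul_mem (mul_mem (mul_mem ha hb) ha) hb) (inv_mem ha)) hb) hb) (inv_mem ha)) hb) (inv_mem ha)) (inv_mem hb))
    · rw [wordy₂]
      exact (mul_mem (mul_mem (mul_mem (mul_mem (mul_mem (mul_mem (mul_mem (mul_mem (mul_mem (mul_mem (mul_mem ha hb) ha) (inv_mem hb)) (inv_mem ha)) hb) (inv_mem ha)) (inv_mem ha)) hb) (inv_mem ha)) (inv_mem ha)) (inv_mem ha))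
  · rw [Subgroup.closure_le]
    rintro z hz
    simp only [Set.mem_insert_iff, Set.mem_singleton_iff] at hz
    rcases hz with rfl | rfl
    · rw [wordx₁]
      exact (mul_mem (mul_mem (mul_mem (mul_mem (mul_mem (mul_mem (mul_mem (mul_mem (mul_mem (mul_mem (mul_mem (inv_mem hc) (inv_mem hc)) (inv_mem hd)) hc) hc) (inv_mem hd)) (inv_mem hd)) hc) (inv_mem hd)) (inv_mem hd)) hc) (inv_mem hd))
    · rw [wordy₁]
      exact (mul_mem (mul_mem (mul_mem (mul_mem (mul_mem (mul_mem (mul_mem (mul_mem (mul_mem (mul_mem (mul_mem (mul_mem hd hc) hc) (inv_mem hd)) hc) (inv_mem hd)) (inv_mem hd)) (inv_mem hc)) (inv_mem hc)) hd) hc) hc) hd)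

end Data

/-- in the symmetric group on `{1,…,16}` (modelled by `Equiv.Perm (Fin 16)`
with zero-based points, cycles given by `List.formPerm`), with
`x₁ = (1,…,11)(12,…,16)`, `y₁ = (1,5,3,4,10,2,8,9,11,6,7)(12,14,15,13,16)`,
`x₂ = (1,2,9,10,6)(3,11,5,4,7)(12,13,14,15,16)`,
`y₂ = (1,4,8,11,3)(2,9,7,5,6)(12,14,15,13,16)` and `K = ⟨x₁,y₁⟩`, we have
`⟨x₂,y₂⟩ = K`, the elements `x₁, y₁, x₁y₁` have order `55`, the elements
`x₂, y₂, x₂y₂` have order `5`, and `{(x₁,y₁),(x₂,y₂)}` is a Beauville structure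
for `K` of type `((55,55,55),(5,5,5))`. -/
theorem m11_times_a5_beauville_structure
    (x₁ y₁ x₂ y₂ : Equiv.Perm (Fin 16))
    (hx₁ : x₁ = List.formPerm [(0 : Fin 16), 1, 2, 3, 4, 5, 6, 7, 8, 9, 10] *
      List.formPerm [(11 : Fin 16), 12, 13, 14, 15])
    (hy₁ : y₁ = List.formPerm [(0 : Fin 16), 4, 2, 3, 9, 1, 7, 8, 10, 5, 6] *
      List.formPerm [(11 : Fin 16), 13, 14, 12, 15])
    (hx₂ : x₂ = List.formPerm [(0 : Fin 16), 1, 8, 9, 5] *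
      List.formPerm [(2 : Fin 16), 10, 4, 3, 6] *
      List.formPerm [(11 : Fin 16), 12, 13, 14, 15])
    (hy₂ : y₂ = List.formPerm [(0 : Fin 16), 3, 7, 10, 2] *
      List.formPerm [(1 : Fin 16), 8, 6, 4, 5] *
      List.formPerm [(11 : Fin 16), 13, 14, 12, 15])
    (K : Subgroup (Equiv.Perm (Fin 16))) (hK : K = Subgroup.closure {x₁, y₁}) :
    Subgroup.closure {x₂, y₂} = K ∧
    orderOf x₁ = 55 ∧ orderOf y₁ = 55 ∧ orderOf (x₁ * y₁) = 55 ∧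
    orderOf x₂ = 5 ∧ orderOf y₂ = 5 ∧ orderOf (x₂ * y₂) = 5 ∧
    IsBeauvilleStructureFor K x₁ y₁ x₂ y₂ := by
  subst hx₁ hy₁ hx₂ hy₂ hK
  refine ⟨closure_eq, ordx₁, ordy₁, ordxy₁, ordx₂, ordy₂, ordxy₂, rfl, closure_eq, ?_⟩
  apply Set.eq_singleton_iff_unique_mem.mpr
  constructor
  · exact ⟨⟨0, 1, one_mem _, by simp⟩, ⟨0, 1, one_mem _, by simp⟩⟩
  · rintro a ⟨⟨i, g, -, h1 | h1 | h1⟩, ⟨j, g', -, h2 | h2 | h2⟩⟩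
    · exact key h1 h2 ordx₁ l1 s1 q1 t1
    · exact key h1 h2 ordx₁ l1 s1 q2 t2
    · exact key h1 h2 ordx₁ l1 s1 q3 t3
    · exact key h1 h2 ordy₁ l2 s2 q1 t1
    · exact key h1 h2 ordy₁ l2 s2 q2 t2
    · exact key h1 h2 ordy₁ l2 s2 q3 t3
    · exact key h1 h2 ordxy₁ l3 s3 q1 t1
    · exact key h1 h2 ordxy₁ l3 s3 q2 t2
    · exact key h1 h2 ordxy₁ l3 s3 q3 t3
end
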